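/- arXiv:2407.08620 — 4 statements merged into one kernel-verified Lean document; each statement's English description precedes it below -/
import Mathlib

section
/- Let C be a class of LTSs over a common alphabet such that for every A ∈ C there exists a history-deterministic A' ∈ C with L(A') = L(A). Then an LTS A ∈ C is history-deterministic if and only if A is guidable with respect to C. -/
/-- A labelled transition system over alphabet `Al`; `none` labels are ε-transitions.
`Acc` is the set of accepting infinite runs (as infinite sequences of transitions). -/
structure LTS (Al : Type) where
  St : Type
  init : St
  Tr : St → Option Al → St → Prop
  Acc : (ℕ → St × Option Al × St) → Prop

namespace LTS

variable {Al : Type}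

/-- `Path M q l q'` : the list `l` of transitions is a valid path of `M` from `q` to `q'`. -/
def Path (M : LTS Al) : M.St → List (M.St × Option Al × M.St) → M.St → Prop
  | q, [], q' => q = q'
  | q, t :: l, q' => t.1 = q ∧ M.Tr t.1 t.2.1 t.2.2 ∧ Path M t.2.2 l q'

/-- The finite word read along a list of transitions (ε-labels removed). -/
def wordOf {S : Type} (l : List (S × Option Al × S)) : List Al :=
  l.filterMap (fun t => t.2.1)

/-- A transition sequence over the single letter `σ` from `q` to `q'`:
one `σ`-labelled transition together with finitely many ε-transitions. -/
def SeqOver (M : LTS Al) (q : M.St) (σ : Al) (l : List (M.St × Option Al × M.St))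
    (q' : M.St) : Prop :=
  M.Path q l q' ∧ wordOf l = [σ]

/-- An infinite run of `M` from the initial state. -/
def IsRun (M : LTS Al) (ρ : ℕ → M.St × Option Al × M.St) : Prop :=
  (ρ 0).1 = M.init ∧ ∀ n, M.Tr (ρ n).1 (ρ n).2.1 (ρ n).2.2 ∧ (ρ (n + 1)).1 = (ρ n).2.2

/-- `ρ` is a (transition-)sequence on the infinite word `w`: the subsequence of
non-ε labels of `ρ` is exactly `w`. -/
def RunOn {S : Type} (ρ : ℕ → S × Option Al × S) (w : ℕ → Al) : Prop :=
  ∃ φ : ℕ → ℕ, StrictMono φ ∧ (∀ i, (ρ (φ i)).2.1 = some (w i)) ∧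
    ∀ n, (ρ n).2.1 ≠ none → ∃ i, φ i = n

/-- The language of infinite words of `M`. -/
def Lang (M : LTS Al) : Set (ℕ → Al) :=
  { w | ∃ ρ, M.IsRun ρ ∧ RunOn ρ w ∧ M.Acc ρ }

/-- `ρ` is the concatenation of the blocks `ms`. -/
def IsFlatten {T : Type} (ms : ℕ → List T) (ρ : ℕ → T) : Prop :=
  ∃ b : ℕ → ℕ, b 0 = 0 ∧ (∀ i, b (i + 1) = b i + (ms i).length) ∧
    ∀ i j (h : j < (ms i).length), ρ (b i + j) = (ms i).get ⟨j, h⟩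

/-- The concatenation of the blocks `ms` is an accepting run-sequence of `M`. -/
def FlatAcc (M : LTS Al) (ms : ℕ → List (M.St × Option Al × M.St)) : Prop :=
  ∃ ρ, IsFlatten ms ρ ∧ M.Acc ρ

/-- The moves `em` (one transition sequence per round) form a run of `M` from the
initial state on the letters `w`. -/
def ValidMoves (M : LTS Al) (w : ℕ → Al) (em : ℕ → List (M.St × Option Al × M.St)) : Prop :=
  ∃ q : ℕ → M.St, q 0 = M.init ∧ ∀ i, M.SeqOver (q i) (w i) (em i) (q (i + 1))

/-- `B.Simulates M` : Eve (playing in `B`) has a winning strategy in the simulation game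
`Sim(B, M)` against Adam (playing in `M`): in each round Adam picks a letter and a
transition sequence in `M` over it, then Eve picks a transition sequence in `B` over it;
Eve wins if her run is accepting or Adam's run is rejecting. -/
def Simulates (B M : LTS Al) : Prop :=
  ∃ st : List (Al × List (M.St × Option Al × M.St)) → List (B.St × Option Al × B.St),
    ∀ am : ℕ → Al × List (M.St × Option Al × M.St),
      M.ValidMoves (fun i => (am i).1) (fun i => (am i).2) →
        ¬ M.FlatAcc (fun i => (am i).2) ∨
          (B.ValidMoves (fun i => (am i).1)
              (fun i => st (List.ofFn fun j : Fin (i + 1) => am j.1)) ∧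
            B.FlatAcc (fun i => st (List.ofFn fun j : Fin (i + 1) => am j.1)))

/-- `M.HD` : Eve has a winning strategy in the letter game on `M`
(history-determinism): Adam picks letters, Eve picks transition sequences, and Eve
wins if the word is not in the language of `M` or her run is accepting. -/
def HD (M : LTS Al) : Prop :=
  ∃ st : List Al → List (M.St × Option Al × M.St),
    ∀ w : ℕ → Al, w ∈ M.Lang →
      M.ValidMoves w (fun i => st (List.ofFn fun j : Fin (i + 1) => w j.1)) ∧
      M.FlatAcc (fun i => st (List.ofFn fun j : Fin (i + 1) => w j.1))

/-- `G1Win B M` : Eve (playing in `B`) has a winning strategy in the one-token game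
`G1(B, M)` against Adam (playing in `M`): in each round Adam picks a letter, Eve picks a
transition sequence in `B` over it, then Adam picks a transition sequence in `M` over it;
Eve wins if her run is accepting or Adam's run is rejecting. -/
def G1Win (B M : LTS Al) : Prop :=
  ∃ st : List (Al × List (M.St × Option Al × M.St)) → Al → List (B.St × Option Al × B.St),
    ∀ am : ℕ → Al × List (M.St × Option Al × M.St),
      M.ValidMoves (fun i => (am i).1) (fun i => (am i).2) →
        B.ValidMoves (fun i => (am i).1)
          (fun i => st (List.ofFn fun j : Fin i => am j.1) (am i).1) ∧
        (B.FlatAcc (fun i => st (List.ofFn fun j : Fin i => am j.1) (am i).1) ∨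
          ¬ M.FlatAcc (fun i => (am i).2))

/-- `B` is a 1-token ghost of `M`. -/
def Ghost1 (B M : LTS Al) : Prop := B.Lang = M.Lang ∧ G1Win B M

/-- `M` is guidable with respect to the class `C` : `M` simulates every member of `C`
whose language is contained in that of `M`. -/
def Guidable (M : LTS Al) (C : Set (LTS Al)) : Prop :=
  ∀ B ∈ C, B.Lang ⊆ M.Lang → M.Simulates B

/-- A deterministic LTS: no ε-transitions and at most one transition per state and letter. -/
def Deterministic (M : LTS Al) : Prop :=
  (∀ q q', ¬ M.Tr q none q') ∧
    ∀ q a q₁ q₂, M.Tr q (some a) q₁ → M.Tr q (some a) q₂ → q₁ = q₂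

end LTS

/-
If `M` is history-deterministic, Eve wins `Sim(M, B)` by ignoring Adam's run and playing her
letter-game strategy on his letters: when Adam's run is accepting, his word lies in
`L(B) ⊆ L(M)`, so her run is accepting. Conversely, take a history-deterministic `M' ∈ C` with
`L(M') = L(M)`; guidability makes `M` simulate `M'`. Eve wins the letter game on `M` by letting
the letter-game strategy of `M'` play Adam's part in `Sim(M, M')` and answering with her
simulation strategy: Adam's run in `M'` is accepting on every word of `L(M)`.
-/

theorem List.exists_getElem_of_filterMap_eq_singleton {α β : Type*} {f : α → Option β}
    {l : List α} {a : β} (h : l.filterMap f = [a]) :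
    ∃ j, ∃ hj : j < l.length, f l[j] = some a ∧
      ∀ k (hk : k < l.length), k ≠ j → f l[k] = none := by
  obtain ⟨l₁, x, l₂, rfl, hl₁, hx, hl₂⟩ := List.filterMap_eq_cons_iff.mp h
  rw [List.filterMap_eq_nil_iff] at hl₂
  refine ⟨l₁.length, by simp, by simpa using hx, fun k hk hne => ?_⟩
  rcases Nat.lt_or_gt_of_ne hne with hlt | hgt
  · rw [List.getElem_append_left hlt]
    exact hl₁ _ (List.getElem_mem hlt)
  · rw [List.getElem_append_right (by omega)]
    obtain ⟨m, hm⟩ : ∃ m, k - l₁.length = m + 1 := ⟨k - l₁.length - 1, by omega⟩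
    simp only [hm, List.getElem_cons_succ]
    exact hl₂ _ (List.getElem_mem _)

theorem Nat.exists_eq_block_add {b len : ℕ → ℕ} (hb0 : b 0 = 0)
    (hbs : ∀ i, b (i + 1) = b i + len i) (hpos : ∀ i, 0 < len i) (n : ℕ) :
    ∃ i j, j < len i ∧ n = b i + j := by
  induction n with
  | zero => exact ⟨0, 0, hpos 0, hb0.symm⟩
  | succ n ih =>
    obtain ⟨i, j, hj, rfl⟩ := ih
    by_cases hlast : j + 1 < len i
    · exact ⟨i, j + 1, hlast, rfl⟩
    · exact ⟨i + 1, 0, hpos _, by rw [hbs]; omega⟩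

/-- The history of `Sim(M, M')` matching the letter-game history `u` when Adam's moves in `M'`
are chosen by the letter-game strategy `f`. -/
def List.prefixMoves {α β : Type*} (f : List α → β) (u : List α) : List (α × β) :=
  List.ofFn fun j : Fin u.length => (u[j], f (u.take (j + 1)))

theorem List.prefixMoves_ofFn {α β : Type*} (f : List α → β) (w : ℕ → α) (n : ℕ) :
    (List.ofFn fun j : Fin n => w j).prefixMoves f =
      List.ofFn fun j : Fin n => (w j, f (List.ofFn fun k : Fin (j + 1) => w k)) :=
  List.ext_getElem (by simp [prefixMoves]) fun j _ hj => by
    simp only [List.length_ofFn] at hj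
    simp [prefixMoves, ← Fin.ofFn_take_eq_take_ofFn (show j + 1 ≤ n by omega)]

namespace LTS

variable {Al : Type} {M : LTS Al}

namespace Path

variable {q q' : M.St} {l : List (M.St × Option Al × M.St)}

theorem tr_getElem (hp : M.Path q l q') (j : ℕ) (hj : j < l.length) :
    M.Tr l[j].1 l[j].2.1 l[j].2.2 := by
  induction l generalizing q j with
  | nil => simp at hj
  | cons t l ih =>
    cases j with
    | zero => exact hp.2.1
    | succ j => exact ih hp.2.2 j (by simpa using hj)

theorem fst_getElem_zero (hp : M.Path q l q') (h : 0 < l.length) : l[0].1 = q := by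
  cases l with
  | nil => simp at h
  | cons t l => exact hp.1

theorem fst_getElem_succ (hp : M.Path q l q') (j : ℕ) (hj : j + 1 < l.length) :
    l[j + 1].1 = l[j].2.2 := by
  induction l generalizing q j with
  | nil => simp at hj
  | cons t l ih =>
    cases j with
    | zero => exact fst_getElem_zero hp.2.2 (by simpa using hj)
    | succ j => exact ih hp.2.2 j (by simpa using hj)

theorem snd_getElem_of_succ_eq_length (hp : M.Path q l q') (j : ℕ) (hj : j + 1 = l.length) :
    (l[j]'(by omega)).2.2 = q' := by
  induction l generalizing q j with
  | nil => simp at hj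
  | cons t l ih =>
    cases j with
    | zero =>
      obtain rfl : l = [] := List.eq_nil_of_length_eq_zero (by simpa using hj)
      exact hp.2.2
    | succ j => exact ih hp.2.2 j (by simpa using hj)

end Path

theorem SeqOver.length_pos {q q' : M.St} {σ : Al} {l : List (M.St × Option Al × M.St)}
    (h : M.SeqOver q σ l q') : 0 < l.length := by
  cases l with
  | nil => simp [SeqOver, wordOf] at h
  | cons => simp

section Flatten

variable {w : ℕ → Al} {em : ℕ → List (M.St × Option Al × M.St)}
  {ρ : ℕ → M.St × Option Al × M.St}

theorem IsFlatten.isRun (hf : IsFlatten em ρ) (hv : M.ValidMoves w em) : M.IsRun ρ := by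
  obtain ⟨q, hq0, hseq⟩ := hv
  obtain ⟨b, hb0, hbs, hρ⟩ := hf
  simp only [List.get_eq_getElem] at hρ
  have hpos i := (hseq i).length_pos
  refine ⟨?_, fun n => ?_⟩
  · have h0 := hρ 0 0 (hpos 0)
    rw [hb0] at h0
    rw [h0, (hseq 0).1.fst_getElem_zero, hq0]
  obtain ⟨i, j, hj, rfl⟩ := Nat.exists_eq_block_add hb0 hbs hpos n
  rw [hρ i j hj]
  refine ⟨(hseq i).1.tr_getElem j hj, ?_⟩
  by_cases hlast : j + 1 < (em i).length
  · rw [add_assoc, hρ i (j + 1) hlast, (hseq i).1.fst_getElem_succ j hlast]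
  · have hnext : b i + j + 1 = b (i + 1) + 0 := by rw [hbs]; omega
    rw [hnext, hρ (i + 1) 0 (hpos _), (hseq (i + 1)).1.fst_getElem_zero,
      (hseq i).1.snd_getElem_of_succ_eq_length j (by omega)]

theorem IsFlatten.runOn (hf : IsFlatten em ρ) (hv : M.ValidMoves w em) : RunOn ρ w := by
  obtain ⟨q, -, hseq⟩ := hv
  obtain ⟨b, hb0, hbs, hρ⟩ := hf
  simp only [List.get_eq_getElem] at hρ
  choose pos hpos hsome hnone using
    fun i => List.exists_getElem_of_filterMap_eq_singleton (hseq i).2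
  refine ⟨fun i => b i + pos i, strictMono_nat_of_lt_succ fun i => ?_, fun i => ?_,
    fun n hn => ?_⟩
  · have := hbs i
    have := hpos i
    omega
  · rw [hρ i _ (hpos i)]
    exact hsome i
  obtain ⟨i, j, hj, rfl⟩ :=
    Nat.exists_eq_block_add hb0 hbs (fun i => (hseq i).length_pos) n
  refine ⟨i, show b i + pos i = b i + j from ?_⟩
  by_contra hne
  exact hn (by rw [hρ i j hj]; exact hnone i j hj (by omega))

theorem mem_lang_of_validMoves (hv : M.ValidMoves w em) (ha : M.FlatAcc em) : w ∈ M.Lang :=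
  let ⟨ρ, hf, hacc⟩ := ha
  ⟨ρ, hf.isRun hv, hf.runOn hv, hacc⟩

end Flatten

theorem HD.simulates {B : LTS Al} (hM : M.HD) (hsub : B.Lang ⊆ M.Lang) : M.Simulates B := by
  obtain ⟨σ, hσ⟩ := hM
  refine ⟨fun h => σ (h.map Prod.fst), fun am hv => or_iff_not_imp_left.mpr fun hacc => ?_⟩
  simpa only [List.map_ofFn, Function.comp_def] using
    hσ _ (hsub (mem_lang_of_validMoves hv (not_not.mp hacc)))

theorem HD.of_simulates {M' : LTS Al} (hM' : M'.HD) (hsim : M.Simulates M')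
    (hsub : M.Lang ⊆ M'.Lang) : M.HD := by
  obtain ⟨σ, hσ⟩ := hM'
  obtain ⟨τ, hτ⟩ := hsim
  refine ⟨fun u => τ (u.prefixMoves σ), fun w hw => ?_⟩
  have hplay := hσ w (hsub hw)
  rcases hτ (fun i => (w i, σ (List.ofFn fun j : Fin (i + 1) => w j))) hplay.1 with hrej | hwin
  · exact absurd hplay.2 hrej
  · simpa only [List.prefixMoves_ofFn] using hwin

end LTS

/-- If every LTS in the class `C` has a language-equivalent
history-deterministic LTS in `C`, then for every `M ∈ C`, `M` is history-deterministic
iff `M` is guidable with respect to `C`. -/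
theorem hd_closure_criterion {Al : Type} (C : Set (LTS Al))
    (hC : ∀ M ∈ C, ∃ M' ∈ C, M'.HD ∧ M'.Lang = M.Lang) :
    ∀ M ∈ C, (M.HD ↔ M.Guidable C) := by
  intro M hM
  refine ⟨fun hHD B _ hsub => hHD.simulates hsub, fun hguid => ?_⟩
  obtain ⟨M', hM'C, hM'HD, hlang⟩ := hC M hM
  exact hM'HD.of_simulates (hguid M' hM'C hlang.le) hlang.ge
end

section
/- Let A = (Σ, Q, ι, c₀, Δ, F_Q, F_C) be a (𝒞,K,S)-automaton with safety, synchronous-reachability, or asynchronous-reachability acceptance. Then Delay(A) is a (𝒞,K,S)-automaton with the same acceptance semantics, L(Delay(A)) = L(A), and Eve has a winning strategy in the 1-token game G1(Delay(A), A); that is, Delay(A) is a 1-token ghost of A. -/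
/-- The three acceptance semantics for uniform automata classes. -/
inductive AccSem where
  | safety
  | syncReach
  | asyncReach

/-- A `(𝒞, K, S)`-automaton over alphabet `Al` with content space `C` (the constraints
relating it to `K` and `S`, and finiteness, are expressed by `UAut.WF`). Partial
functions `C ⇀ C` are modelled as functions `C → Option C`. -/
structure UAut (Al C : Type) where
  Q : Type
  init : Q
  c0 : C
  Δ : Set (Q × Option Al × (C → Option C) × Q)
  FQ : Set Q
  FC : Set C

namespace UAut

variable {Al C : Type}

/-- Wellformedness of a `(𝒞, K, S)`-automaton: finite state space, finitely many
transitions, all update functions in `K`, and accepting contents in `S`. -/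
def WF (M : UAut Al C) (K : Set (C → Option C)) (S : Set (Set C)) : Prop :=
  Finite M.Q ∧ M.Δ.Finite ∧ (∀ t ∈ M.Δ, t.2.2.1 ∈ K) ∧ M.FC ∈ S

/-- The LTS induced by a `(𝒞, K, S)`-automaton with the given acceptance semantics:
states are configurations in `Q × C`. -/
def toLTS (M : UAut Al C) (sem : AccSem) : LTS Al where
  St := M.Q × C
  init := (M.init, M.c0)
  Tr := fun s x s' => ∃ f, (s.1, x, f, s'.1) ∈ M.Δ ∧ f s.2 = some s'.2
  Acc := fun ρ =>
    match sem with
    | .safety => ∀ n, (ρ n).1.1 ∈ M.FQ ∧ (ρ n).1.2 ∈ M.FC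
    | .syncReach => ∃ n, (ρ n).1.1 ∈ M.FQ ∧ (ρ n).1.2 ∈ M.FC
    | .asyncReach => (∃ n, (ρ n).1.1 ∈ M.FQ) ∧ (∃ n, (ρ n).1.2 ∈ M.FC)

/-- The `Delay` of a `(𝒞, K, S)`-automaton: it delays every transition by one letter,
storing the previous letter in the state space (`none` is the new initial state `ι'`). -/
def Delay (M : UAut Al C) : UAut Al C where
  Q := Option (M.Q × Al)
  init := none
  c0 := M.c0
  Δ := { t |
      (∃ σ : Al, t = (none, some σ, fun c => some c, some (M.init, σ))) ∨
      (∃ q σ σ' f q', (q, some σ, f, q') ∈ M.Δ ∧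
        t = (some (q, σ), some σ', f, some (q', σ'))) ∨
      (∃ q σ f q', (q, none, f, q') ∈ M.Δ ∧
        t = (some (q, σ), none, f, some (q', σ))) }
  FQ := { x | (∃ q σ, x = some (q, σ) ∧ q ∈ M.FQ) ∨ (x = none ∧ M.init ∈ M.FQ) }
  FC := M.FC

end UAut


/-!
A configuration `((q, σ), c)` of `Delay A` is the configuration `(q, c)` of `A` together with the
letter `σ` that `A` still has to read; forgetting the letter (and sending `ι'` to `ι`) turns a run
of `Delay A` on `w` into a run of `A` on `w`, one letter behind, that visits the same
configurations. Safety and both reachability conditions only depend on the set of visited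
configurations, so acceptance is preserved and `L(Delay A) ⊆ L(A)`.

In `G1(Delay A, A)` Eve plays the initial transition `ι' → (ι, σ₀)` in round `0`, and in round
`i + 1` she replays Adam's move of round `i`, now able to tag it with the letters `σᵢ` and
`σᵢ₊₁`. Her run again visits exactly Adam's configurations, so she wins. Finally, a winning
strategy of Eve in `G1(B, A)` gives `L(A) ⊆ L(B)`: let Adam play an accepting run of `A`.
-/

theorem List.exists_mem_of_filterMap_eq_singleton {α β : Type*} {f : α → Option β}
    {l : List α} {b : β} (h : l.filterMap f = [b]) :
    ∃ a ∈ l, f a = some b ∧ ∀ a' ∈ l, f a' ≠ none → a' = a := by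
  obtain ⟨l₁, a, l₂, rfl, h₁, ha, h₂⟩ := List.filterMap_eq_cons_iff.mp h
  rw [List.filterMap_eq_nil_iff] at h₂
  refine ⟨a, by simp, ha, fun a' ha' hne => ?_⟩
  simp only [List.mem_append, List.mem_cons] at ha'
  rcases ha' with h | h | h
  · exact absurd (h₁ a' h) hne
  · exact h
  · exact absurd (h₂ a' h) hne

namespace LTS

variable {Al : Type}

section Flatten

variable {T : Type} {ms : ℕ → List T} {ρ : ℕ → T}

theorem exists_block_decomposition {L b : ℕ → ℕ} (hb0 : b 0 = 0)
    (hb : ∀ i, b (i + 1) = b i + L i) (hL : ∀ i, 0 < L i) (n : ℕ) :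
    ∃ i j, j < L i ∧ n = b i + j := by
  induction n with
  | zero => exact ⟨0, 0, hL 0, by omega⟩
  | succ n ih =>
    obtain ⟨i, j, hj, rfl⟩ := ih
    by_cases h : j + 1 < L i
    · exact ⟨i, j + 1, h, by omega⟩
    · exact ⟨i + 1, 0, hL _, by have := hb i; omega⟩

theorem block_decomposition_unique {L b : ℕ → ℕ} (hb : ∀ i, b (i + 1) = b i + L i)
    {i j i' j' : ℕ} (hj : j < L i) (hj' : j' < L i') (h : b i + j = b i' + j') :
    i = i' ∧ j = j' := by
  have hmono : Monotone b := monotone_nat_of_le_succ fun n => by have := hb n; omega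
  rcases lt_trichotomy i i' with hi | rfl | hi
  · have := hmono (show i + 1 ≤ i' by omega); have := hb i; omega
  · omega
  · have := hmono (show i' + 1 ≤ i by omega); have := hb i'; omega

theorem exists_isFlatten (hms : ∀ i, ms i ≠ []) : ∃ ρ, IsFlatten ms ρ := by
  let b : ℕ → ℕ := fun i => ∑ k ∈ Finset.range i, (ms k).length
  have hb : ∀ i, b (i + 1) = b i + (ms i).length := fun i => Finset.sum_range_succ _ i
  choose I J hJ hIJ using exists_block_decomposition (by simp [b]) hb
    (fun i => List.length_pos_iff.mpr (hms i))
  refine ⟨fun n => (ms (I n))[J n]'(hJ n), b, by simp [b], hb, fun i j hj => ?_⟩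
  obtain ⟨hi, hj'⟩ := block_decomposition_unique hb (hJ (b i + j)) hj (hIJ (b i + j)).symm
  have hget : ∀ i' j' (h' : j' < (ms i').length), i' = i → j' = j →
      (ms i')[j'] = (ms i).get ⟨j, hj⟩ := by
    rintro _ _ _ rfl rfl; rfl
  exact hget _ _ _ hi hj'

theorem IsFlatten.unique {ρ' : ℕ → T} (hms : ∀ i, ms i ≠ []) (h : IsFlatten ms ρ)
    (h' : IsFlatten ms ρ') : ρ = ρ' := by
  obtain ⟨b, hb0, hb, hρ⟩ := h
  obtain ⟨b', hb0', hb', hρ'⟩ := h'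
  obtain rfl : b = b' := funext fun i => by
    induction i with
    | zero => rw [hb0, hb0']
    | succ i ih => rw [hb, hb', ih]
  funext n
  obtain ⟨i, j, hj, rfl⟩ :=
    exists_block_decomposition hb0 hb (fun i => List.length_pos_iff.mpr (hms i)) n
  rw [hρ i j hj, hρ' i j hj]

theorem IsFlatten.map {U : Type} (f : T → U) (h : IsFlatten ms ρ) :
    IsFlatten (fun i => (ms i).map f) (f ∘ ρ) := by
  obtain ⟨b, hb0, hb, hρ⟩ := h
  exact ⟨b, hb0, by simpa using hb, fun i j hj => by simp [hρ i j (by simpa using hj)]⟩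

theorem IsFlatten.tail (h : IsFlatten ms ρ) :
    IsFlatten (fun i => ms (i + 1)) (fun n => ρ (n + (ms 0).length)) := by
  obtain ⟨b, hb0, hb, hρ⟩ := h
  have hle : ∀ i, (ms 0).length ≤ b (i + 1) := fun i => by
    induction i with
    | zero => simp [hb, hb0]
    | succ i ih => have := hb (i + 1); omega
  refine ⟨fun i => b (i + 1) - (ms 0).length, by simp [hb, hb0], fun i => ?_, fun i j hj => ?_⟩
  · have h1 : b (i + 2) = b (i + 1) + (ms (i + 1)).length := hb (i + 1)
    have := hle i
    show b (i + 2) - _ = b (i + 1) - _ + (ms (i + 1)).length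
    omega
  · have := hle i
    show ρ (b (i + 1) - (ms 0).length + j + (ms 0).length) = _
    rw [← hρ (i + 1) j hj]
    congr 1
    omega

theorem IsFlatten.apply_zero {t : T} {l : List T} (h : IsFlatten ms ρ) (h0 : ms 0 = t :: l) :
    ρ 0 = t := by
  obtain ⟨b, hb0, -, hρ⟩ := h
  simpa [hb0, h0] using hρ 0 0 (by simp [h0])

theorem isFlatten_map_range' {b : ℕ → ℕ} (hb0 : b 0 = 0) (hb : Monotone b) (ρ : ℕ → T) :
    IsFlatten (fun i => (List.range' (b i) (b (i + 1) - b i)).map ρ) ρ :=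
  ⟨b, hb0, fun i => by
    have := hb (show i ≤ i + 1 by omega)
    simp only [List.length_map, List.length_range']
    omega,
    fun i j hj => by simp⟩

theorem IsFlatten.eq_map_range' (h : IsFlatten ms ρ) :
    ∃ b : ℕ → ℕ, b 0 = 0 ∧ (∀ i, b (i + 1) = b i + (ms i).length) ∧
      ∀ i, ms i = (List.range' (b i) (ms i).length).map ρ := by
  obtain ⟨b, hb0, hb, hρ⟩ := h
  exact ⟨b, hb0, hb, fun i => List.ext_getElem (by simp) fun j hj _ => by simp [hρ i j hj]⟩

end Flatten

theorem label_eq_none_of_lt {S : Type} {ρ : ℕ → S × Option Al × S} {φ : ℕ → ℕ}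
    (hφ : StrictMono φ) (hcov : ∀ n, (ρ n).2.1 ≠ none → ∃ i, φ i = n) {i n : ℕ}
    (hlo : ∀ k < i, φ k < n) (hhi : n < φ i) : (ρ n).2.1 = none := by
  by_contra hne
  obtain ⟨k, rfl⟩ := hcov n hne
  exact lt_irrefl _ (hlo k (hφ.lt_iff_lt.mp hhi))

theorem wordOf_map_range' {S : Type} {ρ : ℕ → S × Option Al × S} {a k : ℕ} {σ : Al}
    (hnone : ∀ j < k, (ρ (a + j)).2.1 = none) (hlast : (ρ (a + k)).2.1 = some σ) :
    wordOf ((List.range' a (k + 1)).map ρ) = [σ] := by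
  have hnil : (List.range' a k).filterMap (fun n => (ρ n).2.1) = [] :=
    List.filterMap_eq_nil_iff.mpr fun n hn => by
      obtain ⟨h1, h2⟩ := List.mem_range'_1.mp hn
      simpa [Nat.add_sub_cancel' h1] using hnone (n - a) (by omega)
  simp [wordOf, List.filterMap_map, List.range'_concat, List.filterMap_append, hnil, hlast]

theorem runOn_of_isFlatten {S : Type} {ms : ℕ → List (S × Option Al × S)}
    {ρ : ℕ → S × Option Al × S} {w : ℕ → Al} (hw : ∀ i, wordOf (ms i) = [w i])
    (hf : IsFlatten ms ρ) : RunOn ρ w := by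
  obtain ⟨b, hb0, hb, hms⟩ := hf.eq_map_range'
  have hletter : ∀ i, ∃ n ∈ List.range' (b i) (ms i).length, (ρ n).2.1 = some (w i) ∧
      ∀ n' ∈ List.range' (b i) (ms i).length, (ρ n').2.1 ≠ none → n' = n := fun i => by
    have h := hw i
    rw [hms i, wordOf, List.filterMap_map] at h
    exact List.exists_mem_of_filterMap_eq_singleton h
  choose φ hφmem hφw hφuniq using hletter
  have hφb : ∀ i, b i ≤ φ i ∧ φ i < b (i + 1) := fun i => by
    have := List.mem_range'_1.mp (hφmem i); rw [hb]; omega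
  refine ⟨φ, strictMono_nat_of_lt_succ fun i => ?_, hφw, fun n hn => ?_⟩
  · exact (hφb i).2.trans_le (hφb (i + 1)).1
  · have hne : ∀ i, ms i ≠ [] := fun i h => by simpa [h, wordOf] using hw i
    obtain ⟨i, j, hj, rfl⟩ :=
      exists_block_decomposition hb0 hb (fun i => List.length_pos_iff.mpr (hne i)) n
    exact ⟨i, (hφuniq i _ (List.mem_range'_1.mpr (by omega)) hn).symm⟩

variable {M : LTS Al}

def ValidAt (M : LTS Al) (ρ : ℕ → M.St × Option Al × M.St) (n : ℕ) : Prop :=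
  M.Tr (ρ n).1 (ρ n).2.1 (ρ n).2.2 ∧ (ρ (n + 1)).1 = (ρ n).2.2

theorem path_map_range'_iff {ρ : ℕ → M.St × Option Al × M.St} {q : M.St} {a k : ℕ} :
    M.Path q ((List.range' a k).map ρ) (ρ (a + k)).1 ↔
      (ρ a).1 = q ∧ ∀ j < k, M.ValidAt ρ (a + j) := by
  induction k generalizing a q with
  | zero => simp [Path, eq_comm]
  | succ k ih =>
    have hshift : ∀ m, a + (m + 1) = a + 1 + m := fun m => by omega
    rw [List.range'_succ, List.map_cons, hshift k, Path, ih, Nat.forall_lt_succ_left]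
    simp only [← hshift, add_zero, ValidAt, and_assoc]

theorem SeqOver.ne_nil {q q' : M.St} {σ : Al} {l : List (M.St × Option Al × M.St)}
    (h : M.SeqOver q σ l q') : l ≠ [] := by
  rintro rfl
  simp [SeqOver, wordOf] at h

theorem exists_validMoves_isFlatten {ρ : ℕ → M.St × Option Al × M.St} {w : ℕ → Al}
    (hρ : M.IsRun ρ) (hw : RunOn ρ w) : ∃ ms, M.ValidMoves w ms ∧ IsFlatten ms ρ := by
  obtain ⟨φ, hφ, hφw, hcov⟩ := hw
  -- the `i`-th block ends with the transition reading `w i`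
  let b : ℕ → ℕ := fun i => Nat.casesOn i 0 fun i => φ i + 1
  have hbφ : ∀ i, b i ≤ φ i := fun i => by
    cases i with
    | zero => exact Nat.zero_le _
    | succ i => exact hφ (Nat.lt_succ_self i)
  have hb : Monotone b := monotone_nat_of_le_succ fun i => (hbφ i).trans (Nat.le_succ _)
  refine ⟨_, ⟨fun i => (ρ (b i)).1, hρ.1, fun i => ⟨?_, ?_⟩⟩, isFlatten_map_range' rfl hb ρ⟩
  · have := path_map_range'_iff (k := b (i + 1) - b i) |>.mpr ⟨rfl, fun j _ => hρ.2 (b i + j)⟩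
    rwa [Nat.add_sub_cancel' (hb (Nat.le_succ i))] at this
  · rw [show b (i + 1) - b i = φ i - b i + 1 by have := hbφ i; show φ i + 1 - b i = _; omega]
    refine wordOf_map_range' (fun j hj => label_eq_none_of_lt hφ hcov (i := i) ?_ ?_) ?_
    · intro k hk
      cases i with
      | zero => omega
      | succ i =>
        exact (hφ.monotone (Nat.le_of_lt_succ hk)).trans_lt (by show φ i < φ i + 1 + j; omega)
    · omega
    · rw [Nat.add_sub_cancel' (hbφ i)]; exact hφw i

theorem isRun_of_validMoves {w : ℕ → Al} {ms : ℕ → List (M.St × Option Al × M.St)}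
    {ρ : ℕ → M.St × Option Al × M.St} (hv : M.ValidMoves w ms) (hf : IsFlatten ms ρ) :
    M.IsRun ρ := by
  obtain ⟨q, hq0, hq⟩ := hv
  obtain ⟨b, hb0, hb, hms⟩ := hf.eq_map_range'
  have hpos : ∀ i, 0 < (ms i).length := fun i => List.length_pos_iff.mpr (hq i).ne_nil
  have hstart : ∀ i, (ρ (b i)).1 = q i := fun i => by
    have h := (hq i).1
    rw [hms i, ← Nat.sub_add_cancel (hpos i), List.range'_succ, List.map_cons] at h
    exact h.1
  have hvalid : ∀ i, ∀ j < (ms i).length, M.ValidAt ρ (b i + j) := fun i => by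
    have h := (hq i).1
    rw [hms i, ← hstart (i + 1), hb i, path_map_range'_iff] at h
    exact h.2
  refine ⟨by rw [← hq0, ← hstart, hb0], fun n => ?_⟩
  obtain ⟨i, j, hj, rfl⟩ := exists_block_decomposition hb0 hb hpos n
  exact hvalid i j hj

theorem G1Win.lang_subset {B : LTS Al} (h : G1Win B M) : M.Lang ⊆ B.Lang := by
  obtain ⟨st, hst⟩ := h
  rintro w ⟨ρ, hρ, hw, hacc⟩
  obtain ⟨ms, hms, hflat⟩ := exists_validMoves_isFlatten hρ hw
  obtain ⟨hvalid, hwin⟩ := hst (fun i => (w i, ms i)) hms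
  obtain ⟨ρ', hflat', hacc'⟩ := hwin.resolve_right (not_not.mpr ⟨ρ, hflat, hacc⟩)
  obtain ⟨q, hq0, hq⟩ := hvalid
  exact ⟨ρ', isRun_of_validMoves ⟨q, hq0, hq⟩ hflat',
    runOn_of_isFlatten (fun i => (hq i).2) hflat', hacc'⟩

end LTS

namespace UAut

variable {Al C : Type}

section Definitions

variable (M : UAut Al C)

abbrev Transition : Type := (M.Q × C) × Option Al × (M.Q × C)

def liftConf (σ : Al) (s : M.Q × C) : M.Delay.Q × C := (some (s.1, σ), s.2)

def unliftConf (s : M.Delay.Q × C) : M.Q × C := (s.1.elim M.init Prod.fst, s.2)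

def liftTrans (σ τ : Al) (t : M.Transition) : M.Delay.Transition :=
  (M.liftConf σ t.1, t.2.1.map fun _ => τ, M.liftConf ((t.2.1.map fun _ => τ).getD σ) t.2.2)

/-- The states before the `σ`-transition get the pending letter `σ`, the later ones `τ`; the
lifted sequence reads `τ`. -/
def liftPath (σ τ : Al) : List M.Transition → List M.Delay.Transition
  | [] => []
  | t :: l => M.liftTrans σ τ t :: liftPath ((t.2.1.map fun _ => τ).getD σ) τ l

def unliftTrans (σ : Al) (t : M.Delay.Transition) : M.Transition :=
  (M.unliftConf t.1, t.2.1.map fun _ => σ, M.unliftConf t.2.2)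

def initTrans (σ : Al) : M.Delay.Transition := ((none, M.c0), some σ, (some (M.init, σ), M.c0))

def eveBlocks (w : ℕ → Al) (ms : ℕ → List M.Transition) : ℕ → List M.Delay.Transition
  | 0 => [M.initTrans (w 0)]
  | i + 1 => M.liftPath (w i) (w (i + 1)) (ms i)

def eveStrategy (h : List (Al × List M.Transition)) (σ : Al) : List M.Delay.Transition :=
  match h.getLast? with
  | none => [M.initTrans σ]
  | some (σ', l) => M.liftPath σ' σ l

end Definitions

variable {M : UAut Al C} {sem : AccSem}

theorem toLTS_acc_iff_of_range_eq {M' : UAut Al C} (g : M'.Q → M.Q)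
    (hFQ : M'.FQ = g ⁻¹' M.FQ) (hFC : M'.FC = M.FC) {ρ' : ℕ → M'.Transition} {ρ : ℕ → M.Transition}
    (hrange : Set.range (fun n => (g (ρ' n).1.1, (ρ' n).1.2)) = Set.range fun n => (ρ n).1) :
    (M'.toLTS sem).Acc ρ' ↔ (M.toLTS sem).Acc ρ := by
  have hall : ∀ P : M.Q × C → Prop, (∀ n, P (g (ρ' n).1.1, (ρ' n).1.2)) ↔ ∀ n, P (ρ n).1 :=
    fun P => by rw [← Set.forall_mem_range, hrange, Set.forall_mem_range]
  have hex : ∀ P : M.Q × C → Prop, (∃ n, P (g (ρ' n).1.1, (ρ' n).1.2)) ↔ ∃ n, P (ρ n).1 :=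
    fun P => by rw [← Set.exists_range_iff, hrange, Set.exists_range_iff]
  cases sem <;> simp only [toLTS, hFQ, hFC, Set.mem_preimage]
  · exact hall fun s => s.1 ∈ M.FQ ∧ s.2 ∈ M.FC
  · exact hex fun s => s.1 ∈ M.FQ ∧ s.2 ∈ M.FC
  · exact and_congr (hex fun s => s.1 ∈ M.FQ) (hex fun s => s.2 ∈ M.FC)

theorem delay_FQ : M.Delay.FQ = (fun x => x.elim M.init Prod.fst) ⁻¹' M.FQ := by
  ext (_ | ⟨q, σ⟩) <;> show (_ ∨ _) ↔ _ ∈ M.FQ <;> simp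

theorem delay_acc_iff {ρB : ℕ → M.Delay.Transition} {ρ : ℕ → M.Transition}
    (hB0 : (ρB 0).1 = (none, M.c0)) (h0 : (ρ 0).1 = (M.init, M.c0))
    (hshift : ∀ n, M.unliftConf (ρB (n + 1)).1 = (ρ n).1) :
    (M.Delay.toLTS sem).Acc ρB ↔ (M.toLTS sem).Acc ρ := by
  refine toLTS_acc_iff_of_range_eq _ delay_FQ rfl ?_
  ext s
  constructor
  · rintro ⟨_ | n, rfl⟩
    · exact ⟨0, show (ρ 0).1 = M.unliftConf (ρB 0).1 by rw [h0, hB0]; rfl⟩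
    · exact ⟨n, (hshift n).symm⟩
  · rintro ⟨n, rfl⟩
    exact ⟨n + 1, hshift n⟩

theorem delay_tr_none_iff {c : C} {x : Option Al} {s' : Option (M.Q × Al) × C} :
    (M.Delay.toLTS sem).Tr (none, c) x s' ↔ ∃ σ, x = some σ ∧ s' = (some (M.init, σ), c) := by
  obtain ⟨s', c'⟩ := s'
  simp only [toLTS, Delay]
  aesop

theorem delay_tr_some_iff {q : M.Q} {σ : Al} {c : C} {x : Option Al}
    {s' : Option (M.Q × Al) × C} :
    (M.Delay.toLTS sem).Tr (some (q, σ), c) x s' ↔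
      ∃ q', s'.1 = some (q', x.getD σ) ∧
        (M.toLTS sem).Tr (q, c) (x.map fun _ => σ) (q', s'.2) := by
  obtain ⟨s', c'⟩ := s'
  cases x <;> simp [toLTS, Delay] <;> aesop

theorem delay_tr_pending {s s' : M.Delay.Q × C} {x : Option Al}
    (h : (M.Delay.toLTS sem).Tr s x s') :
    ∃ q' σ', s'.1 = some (q', σ') ∧ some σ' = x.or (s.1.map Prod.snd) := by
  obtain ⟨_ | ⟨q, σ⟩, c⟩ := s
  · obtain ⟨σ, rfl, rfl⟩ := delay_tr_none_iff.mp h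
    exact ⟨M.init, σ, rfl, rfl⟩
  · obtain ⟨q', h', -⟩ := delay_tr_some_iff.mp h
    exact ⟨q', _, h', by cases x <;> rfl⟩

theorem delay_tr_liftTrans {σ τ : Al} {t : M.Transition} (h : (M.toLTS sem).Tr t.1 t.2.1 t.2.2)
    (hσ : ∀ a ∈ t.2.1, a = σ) :
    (M.Delay.toLTS sem).Tr (M.liftTrans σ τ t).1 (M.liftTrans σ τ t).2.1
      (M.liftTrans σ τ t).2.2 := by
  obtain ⟨⟨q, c⟩, x, q', c'⟩ := t
  refine delay_tr_some_iff.mpr ⟨q', rfl, ?_⟩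
  cases x with
  | none => exact h
  | some a => obtain rfl := hσ a rfl; exact h

theorem delay_tr_unliftTrans {t : M.Delay.Transition} {q : M.Q} {σ : Al} (hq : t.1.1 = some (q, σ))
    (h : (M.Delay.toLTS sem).Tr t.1 t.2.1 t.2.2) :
    (M.toLTS sem).Tr (M.unliftTrans σ t).1 (M.unliftTrans σ t).2.1
      (M.unliftTrans σ t).2.2 := by
  obtain ⟨⟨x, c⟩, l, s'⟩ := t
  obtain rfl : x = some (q, σ) := hq
  obtain ⟨q', hs', htr⟩ := delay_tr_some_iff.mp h
  have hunlift : M.unliftConf s' = (q', s'.2) := by simp only at hs'; simp [unliftConf, hs']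
  show (M.toLTS sem).Tr (q, c) (l.map fun _ => σ) (M.unliftConf s')
  rw [hunlift]
  exact htr

theorem path_liftPath_of_wordOf_eq_nil (σ τ : Al) :
    ∀ {l : List M.Transition} {s s' : M.Q × C}, (M.toLTS sem).Path s l s' → LTS.wordOf l = [] →
      (M.Delay.toLTS sem).Path (M.liftConf σ s) (M.liftPath σ τ l) (M.liftConf σ s')
  | [], _, _, h, _ => congrArg _ h
  | ⟨_, none, _⟩ :: _, _, _, ⟨rfl, htr, hpath⟩, hw =>
    ⟨rfl, delay_tr_liftTrans htr (by simp), path_liftPath_of_wordOf_eq_nil σ τ hpath hw⟩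
  | ⟨_, some _, _⟩ :: _, _, _, _, hw => by simp [LTS.wordOf] at hw

theorem path_liftPath_of_wordOf_eq_singleton (σ τ : Al) :
    ∀ {l : List M.Transition} {s s' : M.Q × C}, (M.toLTS sem).Path s l s' → LTS.wordOf l = [σ] →
      (M.Delay.toLTS sem).Path (M.liftConf σ s) (M.liftPath σ τ l) (M.liftConf τ s')
  | [], _, _, _, hw => by simp [LTS.wordOf] at hw
  | ⟨_, none, _⟩ :: _, _, _, ⟨rfl, htr, hpath⟩, hw =>
    ⟨rfl, delay_tr_liftTrans htr (by simp), path_liftPath_of_wordOf_eq_singleton σ τ hpath hw⟩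
  | ⟨_, some a, _⟩ :: l, _, _, ⟨rfl, htr, hpath⟩, hw => by
    obtain ⟨rfl, hl⟩ : a = σ ∧ LTS.wordOf l = [] := by simpa [LTS.wordOf] using hw
    exact ⟨rfl, delay_tr_liftTrans htr (by simp), path_liftPath_of_wordOf_eq_nil τ τ hpath hl⟩

theorem wordOf_liftPath (σ τ : Al) :
    ∀ l : List M.Transition, LTS.wordOf (M.liftPath σ τ l) = (LTS.wordOf l).map fun _ => τ
  | [] => rfl
  | ⟨_, none, _⟩ :: l => by simpa [LTS.wordOf, liftPath, liftTrans] using wordOf_liftPath σ τ l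
  | ⟨_, some _, _⟩ :: l => by simpa [LTS.wordOf, liftPath, liftTrans] using wordOf_liftPath τ τ l

theorem seqOver_liftPath {σ τ : Al} {l : List M.Transition} {s s' : M.Q × C}
    (h : (M.toLTS sem).SeqOver s σ l s') :
    (M.Delay.toLTS sem).SeqOver (M.liftConf σ s) τ (M.liftPath σ τ l) (M.liftConf τ s') :=
  ⟨path_liftPath_of_wordOf_eq_singleton σ τ h.1 h.2,
    (wordOf_liftPath σ τ l).trans (congrArg (List.map fun _ => τ) h.2)⟩

theorem map_unliftConf_liftPath (σ τ : Al) :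
    ∀ l : List M.Transition, (M.liftPath σ τ l).map (fun t => M.unliftConf t.1) = l.map Prod.fst
  | [] => rfl
  | t :: l => congrArg (t.1 :: ·) (map_unliftConf_liftPath _ τ l)

theorem eveStrategy_ofFn (am : ℕ → Al × List M.Transition) (i : ℕ) :
    M.eveStrategy (List.ofFn fun j : Fin i => am j) (am i).1 =
      M.eveBlocks (fun i => (am i).1) (fun i => (am i).2) i := by
  cases i with
  | zero => rfl
  | succ i => rw [eveStrategy, List.ofFn_succ', List.concat_eq_append, List.getLast?_concat]; rfl

theorem validMoves_eveBlocks {w : ℕ → Al} {ms : ℕ → List M.Transition}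
    (hv : (M.toLTS sem).ValidMoves w ms) :
    (M.Delay.toLTS sem).ValidMoves w (M.eveBlocks w ms) := by
  obtain ⟨q, hq0, hq⟩ := hv
  refine ⟨fun i => Nat.casesOn i (none, M.c0) fun i => M.liftConf (w i) (q i), rfl, fun i => ?_⟩
  cases i with
  | zero =>
    exact ⟨⟨rfl, delay_tr_none_iff.mpr ⟨_, rfl, rfl⟩, (congrArg (M.liftConf (w 0)) hq0).symm⟩,
      rfl⟩
  | succ i => exact seqOver_liftPath (hq i)

theorem flatAcc_eveBlocks {w : ℕ → Al} {ms : ℕ → List M.Transition}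
    (hv : (M.toLTS sem).ValidMoves w ms) (hacc : (M.toLTS sem).FlatAcc ms) :
    (M.Delay.toLTS sem).FlatAcc (M.eveBlocks w ms) := by
  obtain ⟨q, hq0, hq⟩ := hv
  obtain ⟨ρ, hρ, hacc⟩ := hacc
  have hne : ∀ i, ms i ≠ [] := fun i => (hq i).ne_nil
  have hneE : ∀ i, M.eveBlocks w ms i ≠ [] := fun i h => by
    cases i with
    | zero => simp [eveBlocks] at h
    | succ i =>
      change M.liftPath _ _ _ = [] at h
      exact hne i (by simpa [h] using (map_unliftConf_liftPath (w i) (w (i + 1)) (ms i)).symm)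
  obtain ⟨ρE, hρE⟩ := LTS.exists_isFlatten hneE
  have hshift : (fun n => M.unliftConf (ρE (n + 1)).1) = fun n => (ρ n).1 := by
    have h := hρE.tail.map fun t => M.unliftConf t.1
    simp only [eveBlocks, map_unliftConf_liftPath, List.length_singleton] at h
    exact h.unique (fun i => by simpa using hne i) (hρ.map Prod.fst)
  obtain ⟨t, l, hl⟩ := List.exists_cons_of_ne_nil (hne 0)
  refine ⟨ρE, hρE, (delay_acc_iff (ρ := ρ) ?_ ?_ (congrFun hshift)).mpr hacc⟩
  · rw [hρE.apply_zero rfl]; rfl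
  · have hpath := (hq 0).1
    rw [hl] at hpath
    rw [hρ.apply_zero hl]
    exact hpath.1.trans hq0

variable (M sem) in
theorem delay_g1Win : LTS.G1Win (M.Delay.toLTS sem) (M.toLTS sem) := by
  refine ⟨M.eveStrategy, fun am hv => ?_⟩
  have hvalid := validMoves_eveBlocks hv
  have hwin := (em _).imp_left (flatAcc_eveBlocks (w := fun i => (am i).1) hv)
  rw [← funext (eveStrategy_ofFn am)] at hvalid hwin
  exact ⟨hvalid, hwin⟩

theorem delay_pending_eq_of_runOn {ρB : ℕ → M.Delay.Transition} {w : ℕ → Al} {φ : ℕ → ℕ}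
    (hB : (M.Delay.toLTS sem).IsRun ρB) (hφ : StrictMono φ)
    (hφw : ∀ i, (ρB (φ i)).2.1 = some (w i)) (hcov : ∀ n, (ρB n).2.1 ≠ none → ∃ i, φ i = n)
    (i : ℕ) : ∀ k, φ i + k < φ (i + 1) → ∃ q, (ρB (φ i + k + 1)).1.1 = some (q, w i) := by
  intro k
  induction k with
  | zero =>
    intro _
    obtain ⟨q, σ, hq, hσ⟩ := delay_tr_pending (hB.2 (φ i)).1
    rw [hφw i, Option.some_or, Option.some_inj] at hσ
    exact ⟨q, by rw [(hB.2 _).2, hq, hσ]⟩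
  | succ k ih =>
    intro hk
    obtain ⟨q, hq⟩ := ih (by omega)
    have hnone : (ρB (φ i + k + 1)).2.1 = none :=
      LTS.label_eq_none_of_lt hφ hcov (i := i + 1)
        (fun k' hk' => (hφ.monotone (Nat.le_of_lt_succ hk')).trans_lt (by omega)) hk
    obtain ⟨q', σ', hq', hσ'⟩ := delay_tr_pending (hB.2 (φ i + k + 1)).1
    rw [hnone, hq, Option.none_or, Option.map_some, Option.some_inj] at hσ'
    exact ⟨q', by rw [← add_assoc, (hB.2 _).2, hq', hσ']⟩

theorem delay_isRun_start {ρB : ℕ → M.Delay.Transition} (hB : (M.Delay.toLTS sem).IsRun ρB) :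
    ∃ σ, (ρB 0).2.1 = some σ ∧ (ρB 0).2.2 = (some (M.init, σ), M.c0) := by
  have h0 := (hB.2 0).1
  rw [hB.1] at h0
  exact delay_tr_none_iff.mp h0

theorem isRun_unliftTrans {ρB : ℕ → M.Delay.Transition} {p : ℕ → M.Q × Al}
    (hB : (M.Delay.toLTS sem).IsRun ρB) (hp : ∀ n, (ρB (n + 1)).1.1 = some (p n)) :
    (M.toLTS sem).IsRun fun n => M.unliftTrans (p n).2 (ρB (n + 1)) := by
  obtain ⟨σ, -, htgt⟩ := delay_isRun_start hB
  refine ⟨?_, fun n => ⟨delay_tr_unliftTrans (hp n) (hB.2 (n + 1)).1,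
    congrArg M.unliftConf (hB.2 (n + 1)).2⟩⟩
  show M.unliftConf (ρB 1).1 = _
  rw [(hB.2 0).2, htgt]
  rfl

variable (M sem) in
theorem lang_delay_subset : (M.Delay.toLTS sem).Lang ⊆ (M.toLTS sem).Lang := by
  rintro w ⟨ρB, hB, ⟨φ, hφ, hφw, hcov⟩, hacc⟩
  have hsome : ∀ n, ∃ p, (ρB (n + 1)).1.1 = some p := fun n => by
    obtain ⟨q, σ, h, -⟩ := delay_tr_pending (hB.2 n).1
    exact ⟨(q, σ), by rw [(hB.2 n).2, h]⟩
  choose p hp using hsome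
  have hρ := isRun_unliftTrans hB hp
  have hφs : ∀ i, φ i < φ (i + 1) := fun i => hφ (Nat.lt_add_one i)
  have hφ0 : φ 0 = 0 := by
    obtain ⟨σ, hσ, -⟩ := delay_isRun_start hB
    obtain ⟨i, hi⟩ := hcov 0 (by simp [hσ])
    have := hφ.monotone (Nat.zero_le i)
    omega
  have hletter : ∀ i, (p (φ (i + 1) - 1)).2 = w i := fun i => by
    obtain ⟨q, hq⟩ := delay_pending_eq_of_runOn hB hφ hφw hcov i (φ (i + 1) - 1 - φ i)
      (by have := hφs i; omega)
    rw [show φ i + (φ (i + 1) - 1 - φ i) + 1 = φ (i + 1) - 1 + 1 by have := hφs i; omega,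
      hp] at hq
    exact congrArg Prod.snd (Option.some.inj hq)
  refine ⟨_, hρ, ⟨fun i => φ (i + 1) - 1, strictMono_nat_of_lt_succ fun i => ?_, fun i => ?_,
    fun n hn => ?_⟩, (delay_acc_iff hB.1 hρ.1 fun n => rfl).mp hacc⟩
  · have := hφs (i + 1); have := hφs i; omega
  · show ((ρB (φ (i + 1) - 1 + 1)).2.1.map fun _ => (p (φ (i + 1) - 1)).2) = some (w i)
    rw [Nat.sub_add_cancel (by have := hφs i; omega), hφw, Option.map_some, hletter]
  · obtain ⟨_ | i, hi⟩ := hcov (n + 1) fun h => hn (by simp [unliftTrans, h])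
    · omega
    · exact ⟨i, show φ (i + 1) - 1 = n by omega⟩

theorem WF.delay [Finite Al] {K : Set (C → Option C)} {S : Set (Set C)}
    (hid : (fun c => some c) ∈ K) (hM : M.WF K S) : M.Delay.WF K S := by
  obtain ⟨hQ, hΔ, hK, hS⟩ := hM
  have hQ' : Finite M.Delay.Q := inferInstanceAs (Finite (Option (M.Q × Al)))
  have hfns : (insert (fun c => some c) ((fun t => t.2.2.1) '' M.Δ)).Finite :=
    (hΔ.image _).insert _
  refine ⟨hQ', ?_, ?_, hS⟩
  · refine (Set.finite_univ.prod (Set.finite_univ.prod (hfns.prod Set.finite_univ))).subset ?_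
    rintro t (⟨σ, rfl⟩ | ⟨q, σ, σ', f, q', h, rfl⟩ | ⟨q, σ, f, q', h, rfl⟩)
    · exact ⟨trivial, trivial, Or.inl rfl, trivial⟩
    · exact ⟨trivial, trivial, Or.inr ⟨_, h, rfl⟩, trivial⟩
    · exact ⟨trivial, trivial, Or.inr ⟨_, h, rfl⟩, trivial⟩
  · rintro t (⟨σ, rfl⟩ | ⟨q, σ, σ', f, q', h, rfl⟩ | ⟨q, σ, f, q', h, rfl⟩)
    exacts [hid, hK _ h, hK _ h]

end UAut

/-- For a `(𝒞, K, S)`-automaton `M` with safety, synchronous-reachability or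
asynchronous-reachability acceptance, `Delay M` is again a `(𝒞, K, S)`-automaton with the
same acceptance semantics, `L(Delay M) = L(M)`, and Eve wins `G1(Delay M, M)`; i.e.,
`Delay M` is a 1-token ghost of `M`. -/
theorem delay_is_one_token_ghost {Al C : Type} [Finite Al]
    (K : Set (C → Option C)) (S : Set (Set C))
    (hid : (fun c => some c) ∈ K)
    (M : UAut Al C) (hM : M.WF K S) (sem : AccSem) :
    M.Delay.WF K S ∧
    (M.Delay.toLTS sem).Lang = (M.toLTS sem).Lang ∧
    LTS.G1Win (M.Delay.toLTS sem) (M.toLTS sem) :=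
  ⟨hM.delay hid, (M.lang_delay_subset sem).antisymm (M.delay_g1Win sem).lang_subset,
    M.delay_g1Win sem⟩
end

section
/- The classes of safety and reachability timed automata are closed under 1-token ghost: for every timed automaton T with safety (respectively, reachability) acceptance, there exists a timed automaton T' with safety (respectively, reachability) acceptance such that L(T') = L(T) and Eve has a winning strategy in the 1-token game G1(T', T). -/
/-- Safety / reachability acceptance selector. -/
inductive AccSR where
  | safety
  | reach


open scoped NNReal

/-- Comparison operators in clock constraints. -/
inductive CmpOp where
  | lt | le | eq | ge | gt

def CmpOp.holds : CmpOp → ℝ≥0 → ℕ → Prop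
  | .lt, x, n => x < (n : ℝ≥0)
  | .le, x, n => x ≤ (n : ℝ≥0)
  | .eq, x, n => x = (n : ℝ≥0)
  | .ge, x, n => (n : ℝ≥0) ≤ x
  | .gt, x, n => (n : ℝ≥0) < x

/-- Guards: Boolean combinations of clock constraints `c ⋈ n`. -/
inductive Guard (Cl : Type) where
  | tt : Guard Cl
  | cmp (c : Cl) (op : CmpOp) (n : ℕ) : Guard Cl
  | and (g₁ g₂ : Guard Cl) : Guard Cl
  | or (g₁ g₂ : Guard Cl) : Guard Cl
  | not (g : Guard Cl) : Guard Cl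

/-- Satisfaction of a guard by a clock valuation. -/
def Guard.sat {Cl : Type} : Guard Cl → (Cl → ℝ≥0) → Prop
  | .tt, _ => True
  | .cmp c op n, ν => op.holds (ν c) n
  | .and g₁ g₂, ν => g₁.sat ν ∧ g₂.sat ν
  | .or g₁ g₂, ν => g₁.sat ν ∨ g₂.sat ν
  | .not g, ν => ¬ g.sat ν

/-- A timed automaton over alphabet `Al`: a transition `(q, g, σ, X, q') ∈ Δ` is guarded
by `g` and resets the clocks in `X`. -/
structure TimedAut (Al : Type) where
  Q : Type
  Cl : Type
  init : Q
  Δ : Set (Q × Guard Cl × Al × Set Cl × Q)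
  F : Set Q

namespace TimedAut

variable {Al : Type}

def WF (M : TimedAut Al) : Prop := Finite M.Q ∧ Finite M.Cl ∧ M.Δ.Finite

/-- One step of a timed automaton on the timed letter `(σ, d)` from a configuration. -/
def Step (M : TimedAut Al) (s : M.Q × (M.Cl → ℝ≥0)) (a : Al × ℝ≥0)
    (s' : M.Q × (M.Cl → ℝ≥0)) : Prop :=
  ∃ g X, (s.1, g, a.1, X, s'.1) ∈ M.Δ ∧ g.sat (fun c => s.2 c + a.2) ∧
    (∀ c ∈ X, s'.2 c = 0) ∧ (∀ c ∉ X, s'.2 c = s.2 c + a.2)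

/-- The LTS induced by a timed automaton on infinite timed words, with safety or
reachability acceptance: states are configurations, the alphabet is `Al × ℝ≥0`
(letter paired with delay). -/
def toLTS (M : TimedAut Al) (sem : AccSR) : LTS (Al × ℝ≥0) where
  St := M.Q × (M.Cl → ℝ≥0)
  init := (M.init, fun _ => 0)
  Tr := fun s x s' => ∃ a, x = some a ∧ M.Step s a s'
  Acc := fun ρ =>
    match sem with
    | .safety => ∀ n, (ρ n).1.1 ∈ M.F
    | .reach => ∃ n, (ρ n).1.1 ∈ M.F

end TimedAut


/-!
The ghost of `M` runs one step behind `M`. On reading a letter it cannot know yet which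
transition Adam will take, so it records the transitions of `M` whose guards hold (its own guard
checks them) and keeps two copies of every clock of `M`: one that lets time elapse and one that
is reset. One letter later Adam's transition is known, and the ghost moves to its target state,
requiring it to be recorded as enabled, and switches to the reset copy of every clock that `M`
reset. Eve replays Adam's previous transition, so her run visits the states of his run with the
initial state repeated, and safety and reachability do not see the repetition. Conversely each
run of the ghost is such a replay of a run of `M`, and Adam copying an accepting run of `M`
forces Eve's run to accept, so the two languages coincide.
-/

namespace LTS

variable {Al : Type}

theorem isFlatten_singleton_iff {T : Type} (f ρ : ℕ → T) :
    IsFlatten (fun i => [f i]) ρ ↔ ρ = f := by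
  constructor
  · rintro ⟨b, hb0, hbS, hget⟩
    have hb : ∀ i, b i = i := by
      intro i
      induction i with
      | zero => exact hb0
      | succ n ih => rw [hbS, ih, List.length_singleton]
    funext i
    simpa [hb i] using hget i 0 (by simp)
  · rintro rfl
    refine ⟨id, rfl, fun _ => rfl, fun i j h => ?_⟩
    obtain rfl : j = 0 := by simpa using h
    rfl

theorem flatAcc_singleton_iff (M : LTS Al) (f : ℕ → M.St × Option Al × M.St) :
    M.FlatAcc (fun i => [f i]) ↔ M.Acc f := by
  simp only [FlatAcc, isFlatten_singleton_iff, exists_eq_left]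

end LTS

def AccSR.Sat : AccSR → (ℕ → Prop) → Prop
  | .safety, p => ∀ n, p n
  | .reach, p => ∃ n, p n

-- `0 - 1 = 0`: the sequence `p (n - 1)` is `p` with its first term repeated.
theorem AccSR.sat_comp_pred_iff (sem : AccSR) (p : ℕ → Prop) :
    sem.Sat (fun n => p (n - 1)) ↔ sem.Sat p := by
  cases sem
  · exact ⟨fun h n => h (n + 1), fun h n => h _⟩
  · exact ⟨fun ⟨n, h⟩ => ⟨_, h⟩, fun ⟨n, h⟩ => ⟨n + 1, h⟩⟩

namespace TimedAut

variable {Al : Type} (M : TimedAut Al) (sem : AccSR)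

theorem toLTS_acc_iff
    (ρ : ℕ → (M.toLTS sem).St × Option (Al × ℝ≥0) × (M.toLTS sem).St) :
    (M.toLTS sem).Acc ρ ↔ sem.Sat fun n => (ρ n).1.1 ∈ M.F := by
  cases sem <;> rfl

theorem seqOver_toLTS_iff (q q' : (M.toLTS sem).St) (a : Al × ℝ≥0)
    (l : List ((M.toLTS sem).St × Option (Al × ℝ≥0) × (M.toLTS sem).St)) :
    (M.toLTS sem).SeqOver q a l q' ↔ l = [(q, some a, q')] ∧ M.Step q a q' := by
  constructor
  · rintro ⟨hpath, hword⟩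
    rcases l with _ | ⟨⟨c, o, c'⟩, rest⟩
    · simp [LTS.wordOf] at hword
    obtain ⟨rfl, ⟨b, rfl, hstep⟩, hrest⟩ := hpath
    obtain ⟨rfl, hnil⟩ : b = a ∧ LTS.wordOf rest = [] := by simpa [LTS.wordOf] using hword
    rcases rest with _ | ⟨⟨d, o', d'⟩, rest⟩
    · cases hrest
      exact ⟨rfl, hstep⟩
    · obtain ⟨-, ⟨b', rfl, -⟩, -⟩ := hrest
      simp [LTS.wordOf] at hnil
  · rintro ⟨rfl, hstep⟩
    exact ⟨⟨rfl, ⟨a, rfl, hstep⟩, rfl⟩, rfl⟩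

theorem validMoves_toLTS_iff (w : ℕ → Al × ℝ≥0)
    (em : ℕ → List ((M.toLTS sem).St × Option (Al × ℝ≥0) × (M.toLTS sem).St)) :
    (M.toLTS sem).ValidMoves w em ↔
      ∃ s : ℕ → M.Q × (M.Cl → ℝ≥0), s 0 = (M.init, 0) ∧
        ∀ i, em i = [(s i, some (w i), s (i + 1))] ∧ M.Step (s i) (w i) (s (i + 1)) := by
  simp only [LTS.ValidMoves, seqOver_toLTS_iff]
  rfl

theorem mem_lang_toLTS_iff (w : ℕ → Al × ℝ≥0) :
    w ∈ (M.toLTS sem).Lang ↔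
      ∃ s : ℕ → M.Q × (M.Cl → ℝ≥0), s 0 = (M.init, 0) ∧
        (∀ i, M.Step (s i) (w i) (s (i + 1))) ∧
        (M.toLTS sem).Acc fun i => (s i, some (w i), s (i + 1)) := by
  constructor
  · rintro ⟨ρ, ⟨hρ0, hρ⟩, ⟨φ, hφ, hlabel, hsurj⟩, hacc⟩
    have hφid : φ = id := by
      refine (hφ.range_inj strictMono_id).1 ?_
      rw [Set.range_id, Set.range_eq_univ]
      intro n
      obtain ⟨a, ha, -⟩ := (hρ n).1
      exact hsurj n (by simp [ha])
    replace hlabel : ∀ i, (ρ i).2.1 = some (w i) := by simpa [hφid] using hlabel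
    have hρ_eq : ρ = fun i => ((ρ i).1, some (w i), (ρ (i + 1)).1) := by
      funext i
      rw [(hρ i).2, ← hlabel i]
    refine ⟨fun i => (ρ i).1, hρ0, fun i => ?_, hρ_eq ▸ hacc⟩
    obtain ⟨a, ha, hstep⟩ := (hρ i).1
    rw [hlabel i, Option.some_inj] at ha
    change M.Step (ρ i).1 (w i) (ρ (i + 1)).1
    rwa [(hρ i).2, ha]
  · rintro ⟨s, hs0, hs, hacc⟩
    exact ⟨_, ⟨hs0, fun i => ⟨⟨w i, rfl, hs i⟩, rfl⟩⟩,
      ⟨id, strictMono_id, fun _ => rfl, fun n _ => ⟨n, rfl⟩⟩, hacc⟩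

theorem lang_subset_of_g1Win {N : TimedAut Al} (h : LTS.G1Win (N.toLTS sem) (M.toLTS sem)) :
    (M.toLTS sem).Lang ⊆ (N.toLTS sem).Lang := by
  obtain ⟨st, hst⟩ := h
  intro w hw
  obtain ⟨s, hs0, hs, hacc⟩ := (mem_lang_toLTS_iff M sem w).1 hw
  obtain ⟨hvalid, hwin⟩ := hst (fun i => (w i, [(s i, some (w i), s (i + 1))]))
    ((validMoves_toLTS_iff M sem w _).2 ⟨s, hs0, fun i => ⟨rfl, hs i⟩⟩)
  obtain ⟨t, ht0, ht⟩ := (validMoves_toLTS_iff N sem w _).1 hvalid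
  have hN := hwin.resolve_right (not_not.2 ((LTS.flatAcc_singleton_iff _ _).2 hacc))
  rw [funext fun i => (ht i).1] at hN
  exact (mem_lang_toLTS_iff N sem w).2
    ⟨t, ht0, fun i => (ht i).2, (LTS.flatAcc_singleton_iff (N.toLTS sem) _).1 hN⟩

end TimedAut

namespace Guard

variable {Cl Cl' : Type}

def map (f : Cl → Cl') : Guard Cl → Guard Cl'
  | tt => tt
  | cmp c op n => cmp (f c) op n
  | and g₁ g₂ => and (g₁.map f) (g₂.map f)
  | or g₁ g₂ => or (g₁.map f) (g₂.map f)
  | not g => not (g.map f)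

@[simp]
theorem sat_map (f : Cl → Cl') (g : Guard Cl) (ν : Cl' → ℝ≥0) :
    (g.map f).sat ν ↔ g.sat (ν ∘ f) := by
  induction g <;> simp [map, sat, *]

def all : List (Guard Cl) → Guard Cl
  | [] => tt
  | g :: l => and g (all l)

@[simp]
theorem sat_all (l : List (Guard Cl)) (ν : Cl → ℝ≥0) :
    (all l).sat ν ↔ ∀ g ∈ l, g.sat ν := by
  induction l <;> simp [all, sat, *]

end Guard

open Classical in
noncomputable def flipOn {Cl : Type} (X : Set Cl) (p : Cl → Bool) : Cl → Bool :=
  X.piecewise (fun c => !p c) p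

theorem doubled_clocks_track_step {Cl : Type} {p : Cl → Bool} {X : Set Cl}
    {V V' : Cl × Bool → ℝ≥0} {ν ν' : Cl → ℝ≥0} {d : ℝ≥0}
    (hV' : V' = fun x => if x.2 = p x.1 then V x + d else 0) (hV : ∀ c, V (c, p c) = ν c)
    (hX : ∀ c ∈ X, ν' c = 0) (hnX : ∀ c ∉ X, ν' c = ν c + d) (c : Cl) :
    V' (c, flipOn X p c) = ν' c := by
  by_cases hc : c ∈ X <;> simp [flipOn, hV', hc, hV, hX, hnX]

namespace TimedAut

variable {Al : Type} (M : TimedAut Al)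

/-- `q` is the state of `M` before the letter `last` just read, `enabled` holds the transitions
of `M` whose guards held on it, and the clock `(c, ptr c)` of the ghost carries the clock `c`
of `M`. -/
structure GhostState where
  q : M.Q
  last : Option Al
  ptr : M.Cl → Bool
  enabled : Set M.Δ

instance [Finite Al] [Finite M.Q] [Finite M.Cl] [Finite M.Δ] : Finite M.GhostState :=
  Finite.of_injective (fun s => (s.q, s.last, s.ptr, s.enabled)) fun s s' h => by
    cases s; cases s'; simp_all

abbrev GhostConf : Type := M.GhostState × (M.Cl × Bool → ℝ≥0)

def ghostInit : M.GhostState := ⟨M.init, none, fun _ => false, ∅⟩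

def GhostMove (s s' : M.GhostState) (σ : Al) : Prop :=
  s'.last = some σ ∧
    (s.last = none ∧ s'.q = s.q ∧ s'.ptr = s.ptr ∨
      ∃ τ g X, s.last = some τ ∧ ∃ h : (s.q, g, τ, X, s'.q) ∈ M.Δ,
        ⟨_, h⟩ ∈ s.enabled ∧ s'.ptr = flipOn X s.ptr)

noncomputable def ghostGuard [Finite M.Δ] (s : M.GhostState) : Guard (M.Cl × Bool) :=
  Guard.all (s.enabled.toFinite.toFinset.toList.map fun t => t.1.2.1.map fun c => (c, s.ptr c))

theorem sat_ghostGuard_iff [Finite M.Δ] (s : M.GhostState) (V : M.Cl × Bool → ℝ≥0) :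
    (M.ghostGuard s).sat V ↔ ∀ t ∈ s.enabled, t.1.2.1.sat fun c => V (c, s.ptr c) := by
  simp only [ghostGuard, Guard.sat_all, List.mem_map, Finset.mem_toList, Set.Finite.mem_toFinset,
    forall_exists_index, and_imp, forall_apply_eq_imp_iff₂, Guard.sat_map]
  rfl

noncomputable def ghost [Finite M.Δ] : TimedAut Al where
  Q := M.GhostState
  Cl := M.Cl × Bool
  init := M.ghostInit
  Δ := {t | ∃ s σ s', M.GhostMove s s' σ ∧
    t = (s, M.ghostGuard s', σ, {x | x.2 ≠ s'.ptr x.1}, s')}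
  F := {s | s.q ∈ M.F}

open Classical in
noncomputable def stepWitness (c : M.Q × (M.Cl → ℝ≥0)) (a : Al × ℝ≥0)
    (c' : M.Q × (M.Cl → ℝ≥0)) : Guard M.Cl × Set M.Cl :=
  if h : M.Step c a c' then (h.choose, h.choose_spec.choose) else (.tt, ∅)

theorem stepWitness_spec {c c' : M.Q × (M.Cl → ℝ≥0)} {a : Al × ℝ≥0}
    (h : M.Step c a c') :
    (c.1, (M.stepWitness c a c').1, a.1, (M.stepWitness c a c').2, c'.1) ∈ M.Δ ∧
      (M.stepWitness c a c').1.sat (fun x => c.2 x + a.2) ∧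
      (∀ x ∈ (M.stepWitness c a c').2, c'.2 x = 0) ∧
      (∀ x ∉ (M.stepWitness c a c').2, c'.2 x = c.2 x + a.2) := by
  rw [stepWitness, dif_pos h]
  exact h.choose_spec.choose_spec

noncomputable def ghostNext (C : M.GhostConf) (q : M.Q) (p : M.Cl → Bool) (a : Al × ℝ≥0) :
    M.GhostConf :=
  (⟨q, some a.1, p, {t | t.1.2.1.sat fun c => C.2 (c, p c) + a.2}⟩,
    fun x => if x.2 = p x.1 then C.2 x + a.2 else 0)

section Shadow

variable (s : ℕ → M.Q × (M.Cl → ℝ≥0)) (w : ℕ → Al × ℝ≥0)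

noncomputable def shadowPtr : ℕ → M.Cl → Bool
  | 0 => fun _ => false
  | i + 1 => flipOn (M.stepWitness (s i) (w i) (s (i + 1))).2 (shadowPtr i)

/-- Eve's run of the ghost while Adam runs through `s`. -/
noncomputable def shadow : ℕ → M.GhostConf
  | 0 => (M.ghostInit, 0)
  | i + 1 => M.ghostNext (shadow i) (s i).1 (M.shadowPtr s w i) (w i)

variable {M s w}

theorem shadow_q (hs0 : s 0 = (M.init, 0)) (n : ℕ) : (M.shadow s w n).1.q = (s (n - 1)).1 := by
  cases n
  · rw [hs0]
    rfl
  · rfl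

theorem shadow_tracks (hs0 : s 0 = (M.init, 0)) (hs : ∀ i, M.Step (s i) (w i) (s (i + 1)))
    (i : ℕ) (c : M.Cl) :
    (M.shadow s w i).2 (c, M.shadowPtr s w i c) = (s i).2 c := by
  induction i generalizing c with
  | zero => rw [hs0]; rfl
  | succ i ih =>
    obtain ⟨-, -, hreset, hkeep⟩ := M.stepWitness_spec (hs i)
    exact doubled_clocks_track_step rfl ih hreset hkeep c

end Shadow

abbrev AdamMove (sem : AccSR) : Type :=
  (Al × ℝ≥0) × List ((M.toLTS sem).St × Option (Al × ℝ≥0) × (M.toLTS sem).St)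

noncomputable def eveUpdate (sem : AccSR) (m : M.GhostConf × M.Q × (M.Cl → Bool))
    (e : M.AdamMove sem) :
    M.GhostConf × M.Q × (M.Cl → Bool) :=
  (M.ghostNext m.1 m.2.1 m.2.2 e.1,
    match e.2 with
    | [(c, _, c')] => (c'.1, flipOn (M.stepWitness c e.1 c').2 m.2.2)
    | _ => m.2)

/-- Eve's ghost configuration, with the state and clock pointers of her next move, which she
learns from Adam's last transition. -/
noncomputable def eveMemory (sem : AccSR) :
    List (M.AdamMove sem) →
      M.GhostConf × M.Q × (M.Cl → Bool) :=
  List.foldl (M.eveUpdate sem) ((M.ghostInit, 0), M.init, fun _ => false)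

variable {M} in
theorem eveMemory_ofFn {sem : AccSR}
    {am : ℕ → M.AdamMove sem}
    {s : ℕ → M.Q × (M.Cl → ℝ≥0)} (hs0 : s 0 = (M.init, 0))
    (hmoves : ∀ i, (am i).2 = [(s i, some (am i).1, s (i + 1))]) (i : ℕ) :
    M.eveMemory sem (List.ofFn fun j : Fin i => am j) =
      (M.shadow s (fun i => (am i).1) i, (s i).1, M.shadowPtr s (fun i => (am i).1) i) := by
  induction i with
  | zero => rw [hs0]; rfl
  | succ i ih =>
    rw [List.ofFn_succ', List.concat_eq_append, eveMemory, List.foldl_append, ← eveMemory]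
    simp only [Fin.val_castSucc, ih, Fin.val_last, List.foldl_cons, List.foldl_nil, eveUpdate,
      hmoves i]
    rfl

section

variable [Finite M.Δ]

theorem ghost_wf [Finite Al] [Finite M.Q] [Finite M.Cl] : M.ghost.WF := by
  refine ⟨inferInstanceAs (Finite M.GhostState), inferInstanceAs (Finite (M.Cl × Bool)),
    (Set.finite_range fun x : M.GhostState × Al × M.GhostState =>
      (x.1, M.ghostGuard x.2.2, x.2.1, {c | c.2 ≠ x.2.2.ptr c.1}, x.2.2)).subset ?_⟩
  rintro _ ⟨s, σ, s', -, rfl⟩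
  exact ⟨(s, σ, s'), rfl⟩

theorem ghost_step_iff (C C' : M.GhostConf) (a : Al × ℝ≥0) :
    M.ghost.Step C a C' ↔
      M.GhostMove C.1 C'.1 a.1 ∧ (M.ghostGuard C'.1).sat (fun x => C.2 x + a.2) ∧
        C'.2 = fun x => if x.2 = C'.1.ptr x.1 then C.2 x + a.2 else 0 := by
  constructor
  · rintro ⟨g, X, ⟨s, σ, s', hmove, heq⟩, hsat, hreset, hkeep⟩
    obtain ⟨rfl, rfl, rfl, rfl, rfl⟩ := heq
    refine ⟨hmove, hsat, funext fun x => ?_⟩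
    split_ifs with hx
    · exact hkeep x (not_not.2 hx)
    · exact hreset x hx
  · rintro ⟨hmove, hsat, hclocks⟩
    refine ⟨_, _, ⟨C.1, a.1, C'.1, hmove, rfl⟩, hsat, fun x hx => ?_, fun x hx => ?_⟩ <;>
      rw [hclocks]
    · exact if_neg hx
    · exact if_pos (not_not.1 hx)

theorem ghost_step_ghostNext_iff (C : M.GhostConf) (q : M.Q) (p : M.Cl → Bool)
    (a : Al × ℝ≥0) :
    M.ghost.Step C a (M.ghostNext C q p a) ↔ M.GhostMove C.1 (M.ghostNext C q p a).1 a.1 := by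
  rw [ghost_step_iff, sat_ghostGuard_iff]
  exact ⟨fun h => h.1, fun h => ⟨h, fun _ ht => ht, rfl⟩⟩

section GhostRun

variable {M} {w : ℕ → Al × ℝ≥0} {S : ℕ → M.GhostConf}

theorem ghost_run_replays (hS : ∀ i, M.ghost.Step (S i) (w i) (S (i + 1))) (i : ℕ) :
    ∃ g X, ∃ h : ((S (i + 1)).1.q, g, (w i).1, X, (S (i + 2)).1.q) ∈ M.Δ,
      ⟨_, h⟩ ∈ (S (i + 1)).1.enabled ∧
        (S (i + 2)).1.ptr = flipOn X (S (i + 1)).1.ptr := by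
  obtain ⟨⟨hlast, -⟩, -⟩ := (M.ghost_step_iff _ _ _).1 (hS i)
  obtain ⟨⟨-, hnone | ⟨τ, g, X, hτ, h, henabled, hptr⟩⟩, -⟩ :=
    (M.ghost_step_iff _ _ _).1 (hS (i + 1))
  · simp [hlast] at hnone
  · obtain rfl : τ = (w i).1 := Option.some_inj.1 (hτ.symm.trans hlast)
    exact ⟨g, X, h, henabled, hptr⟩

theorem ghost_run_q_one (hS0 : S 0 = (M.ghost.init, 0))
    (hS : ∀ i, M.ghost.Step (S i) (w i) (S (i + 1))) : (S 1).1.q = M.init := by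
  obtain ⟨⟨-, ⟨-, hq, -⟩ | ⟨τ, -, -, hτ, -⟩⟩, -⟩ :=
    (M.ghost_step_iff _ _ _).1 (hS 0)
  · rw [hq, hS0]
    rfl
  · rw [hS0] at hτ
    cases hτ

open Classical in
theorem exists_run_of_ghost_run (hS0 : S 0 = (M.ghost.init, 0))
    (hS : ∀ i, M.ghost.Step (S i) (w i) (S (i + 1))) :
    ∃ s : ℕ → M.Q × (M.Cl → ℝ≥0), s 0 = (M.init, 0) ∧
      (∀ i, M.Step (s i) (w i) (s (i + 1))) ∧ ∀ n, (S n).1.q = (s (n - 1)).1 := by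
  choose g X hΔ henabled hptr using ghost_run_replays hS
  let ν : ℕ → M.Cl → ℝ≥0 := fun n =>
    Nat.rec 0 (fun i ν c => if c ∈ X i then 0 else ν c + (w i).2) n
  have htrack : ∀ i c, (S i).2 (c, (S (i + 1)).1.ptr c) = ν i c := by
    intro i
    induction i with
    | zero => intro c; rw [hS0]; rfl
    | succ i ih =>
      rw [hptr i]
      exact doubled_clocks_track_step ((M.ghost_step_iff _ _ _).1 (hS i)).2.2 ih
        (fun c hc => if_pos hc) (fun c hc => if_neg hc)
  refine ⟨fun i => ((S (i + 1)).1.q, ν i), ?_, fun i => ⟨g i, X i, hΔ i, ?_,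
    fun c hc => if_pos hc, fun c hc => if_neg hc⟩, ?_⟩
  · exact Prod.ext (ghost_run_q_one hS0 hS) rfl
  · have hguard := (M.sat_ghostGuard_iff _ _).1 ((M.ghost_step_iff _ _ _).1 (hS i)).2.1 _
      (henabled i)
    simpa only [htrack] using hguard
  · rintro (_ | n)
    · show (S 0).1.q = (S 1).1.q
      rw [ghost_run_q_one hS0 hS, hS0]
      rfl
    · rfl

end GhostRun

theorem ghost_toLTS_acc_iff (sem : AccSR) {w : ℕ → Al × ℝ≥0} {S : ℕ → M.GhostConf}
    {s : ℕ → M.Q × (M.Cl → ℝ≥0)} (hlag : ∀ n, (S n).1.q = (s (n - 1)).1) :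
    (M.ghost.toLTS sem).Acc (fun i => (S i, some (w i), S (i + 1))) ↔
      (M.toLTS sem).Acc (fun i => (s i, some (w i), s (i + 1))) := by
  rw [toLTS_acc_iff, toLTS_acc_iff, ← AccSR.sat_comp_pred_iff sem fun n => (s n).1 ∈ M.F]
  simp only [← hlag]
  rfl

theorem ghost_lang_subset (sem : AccSR) : (M.ghost.toLTS sem).Lang ⊆ (M.toLTS sem).Lang := by
  intro w hw
  obtain ⟨S, hS0, hS, hacc⟩ := (mem_lang_toLTS_iff _ _ _).1 hw
  obtain ⟨s, hs0, hs, hlag⟩ := exists_run_of_ghost_run hS0 hS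
  exact (mem_lang_toLTS_iff _ _ _).2 ⟨s, hs0, hs, (M.ghost_toLTS_acc_iff sem hlag).1 hacc⟩

theorem shadow_step {s : ℕ → M.Q × (M.Cl → ℝ≥0)} {w : ℕ → Al × ℝ≥0}
    (hs0 : s 0 = (M.init, 0)) (hs : ∀ i, M.Step (s i) (w i) (s (i + 1))) (i : ℕ) :
    M.ghost.Step (M.shadow s w i) (w i) (M.shadow s w (i + 1)) := by
  refine (M.ghost_step_ghostNext_iff _ _ _ _).2 ⟨rfl, ?_⟩
  cases i with
  | zero => exact Or.inl ⟨rfl, by rw [hs0]; rfl, rfl⟩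
  | succ i =>
    obtain ⟨hΔ, hsat, -⟩ := M.stepWitness_spec (hs i)
    refine Or.inr ⟨_, _, _, rfl, hΔ, ?_, rfl⟩
    show (M.stepWitness (s i) (w i) (s (i + 1))).1.sat
      fun c => (M.shadow s w i).2 (c, M.shadowPtr s w i c) + (w i).2
    simpa only [shadow_tracks hs0 hs] using hsat

theorem ghost_g1Win (sem : AccSR) : LTS.G1Win (M.ghost.toLTS sem) (M.toLTS sem) := by
  refine ⟨fun h a => [((M.eveMemory sem h).1, some a,
    M.ghostNext (M.eveMemory sem h).1 (M.eveMemory sem h).2.1 (M.eveMemory sem h).2.2 a)],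
    fun am hvalid => ?_⟩
  obtain ⟨s, hs0, hs⟩ := (M.validMoves_toLTS_iff sem _ _).1 hvalid
  have heve (i : ℕ) := eveMemory_ofFn hs0 (fun i => (hs i).1) i
  simp only [heve]
  refine ⟨(M.ghost.validMoves_toLTS_iff sem _ _).2
    ⟨_, rfl, fun i => ⟨rfl, M.shadow_step hs0 (fun i => (hs i).2) i⟩⟩, ?_⟩
  rw [or_iff_not_imp_right, not_not, funext fun i => (hs i).1]
  intro hacc
  exact (LTS.flatAcc_singleton_iff _ _).2 ((M.ghost_toLTS_acc_iff sem (shadow_q hs0)).2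
    ((LTS.flatAcc_singleton_iff (M.toLTS sem) _).1 hacc))

end

end TimedAut

/-- The classes of safety and reachability timed automata are closed under
1-token ghost: for every timed automaton `M` with safety (respectively reachability)
acceptance there is a timed automaton `M'` with the same acceptance such that
`L(M') = L(M)` and Eve wins the 1-token game `G1(M', M)`. -/
theorem timed_closed_under_one_token_ghost (Al : Type) [Finite Al]
    (M : TimedAut Al) (hM : M.WF) (sem : AccSR) :
    ∃ M' : TimedAut Al, M'.WF ∧
      (M'.toLTS sem).Lang = (M.toLTS sem).Lang ∧
      LTS.G1Win (M'.toLTS sem) (M.toLTS sem) := by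
  obtain ⟨_, _, hΔ⟩ := hM
  have : Finite M.Δ := hΔ.to_subtype
  have hwin := M.ghost_g1Win sem
  exact ⟨M.ghost, M.ghost_wf,
    (M.ghost_lang_subset sem).antisymm (M.lang_subset_of_g1Win sem hwin), hwin⟩
end

section
/- For every n ≥ 1, there exists a Büchi automaton A over the alphabet {a, b} with at most 2n states such that A is guidable with respect to the class of Büchi automata over {a, b} with at most 2n states, but A is not history-deterministic. Hence history-determinism and guidability are distinct notions for the class of Büchi automata with at most 2n states. -/
/-- A Büchi automaton over alphabet `Al`: no ε-transitions, accepting states `F`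
(finiteness of the state space is stated separately). -/
structure Buchi (Al : Type) where
  Q : Type
  init : Q
  Tr : Q → Al → Q → Prop
  F : Set Q

namespace Buchi

variable {Al : Type}

/-- The LTS induced by a Büchi automaton: an infinite run is accepting iff it visits
accepting states infinitely often. -/
def toLTS (B : Buchi Al) : LTS Al where
  St := B.Q
  init := B.init
  Tr := fun q x q' => ∃ σ, x = some σ ∧ B.Tr q σ q'
  Acc := fun ρ => ∀ N, ∃ n ≥ N, (ρ n).1 ∈ B.F

/-- `BPath B q l q'` : the list `l` of letter-labelled transitions is a path from `q` to `q'`. -/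
def BPath (B : Buchi Al) : B.Q → List (B.Q × Al × B.Q) → B.Q → Prop
  | q, [], q' => q = q'
  | q, t :: l, q' => t.1 = q ∧ B.Tr t.1 t.2.1 t.2.2 ∧ BPath B t.2.2 l q'

/-- A linear (very weak) automaton: every cycle is a self-loop. -/
def IsLinear (B : Buchi Al) : Prop :=
  ∀ q l, l ≠ [] → B.BPath q l q → ∀ t ∈ l, t.1 = q ∧ t.2.2 = q

end Buchi

/-
Encode `a` as `true` and `b` as `false`. The witness is `chainAutomaton m` with `m + 2 = 2n`
states: an `a`-chain `0 → 1 → ⋯ → m` with an `a`-loop at `m`, and an `a`-edge from `m` to a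
`b`-loop `m + 1`; every state is accepting. Its language is `a^ω + a^{≥ m+1} b^ω`. It is not
history-deterministic: after reading `a^{m+1}` Eve would have to know whether `b`s follow.

Let `A'` have at most `m + 2` states and `L(A') ⊆ L(chainAutomaton m)`. No state `q` of `A'`
reached on some `a^j` accepts both `b^ω` and a word starting with `a`. Indeed, reach `q` along an
`a`-path without repeated states, of length `p ≤ m + 1`. If `p ≤ m`, then `a^p b^ω ∈ L(A')`.
Otherwise the path visits every state, so the `b`-successor of `q` lies on it and accepts `b^ω`;
by the first case it is `q` itself, and then `a^{m+1} b a ⋯ ∈ L(A')`.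

Hence in the simulation game Eve follows the chain and, once more than `m` letters have been
read, enters the `b`-loop as soon as Adam's current state accepts `b^ω`: this happens exactly at
the position where Adam's word switches to `b^ω`.
-/

def splice {α : Type*} (f : ℕ → α) (k : ℕ) (g : ℕ → α) : ℕ → α :=
  fun i => if i < k then f i else g (i - k)

theorem splice_zero {α : Type*} {f g : ℕ → α} {k : ℕ} (h : f k = g 0) : splice f k g 0 = f 0 := by
  unfold splice
  split_ifs with hk
  · rfl
  · obtain rfl : k = 0 := by omega
    exact h.symm

theorem splice_const {α : Type*} (a : α) (k : ℕ) :
    splice (fun _ => a) k (fun _ => a) = fun _ => a := by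
  funext i
  simp [splice]

namespace Buchi

variable {Al : Type}

def IsPath (B : Buchi Al) (w : ℕ → Al) (k : ℕ) (g : ℕ → B.Q) : Prop :=
  ∀ i < k, B.Tr (g i) (w i) (g (i + 1))

def IsAccRun (B : Buchi Al) (w : ℕ → Al) (g : ℕ → B.Q) : Prop :=
  (∀ i, B.Tr (g i) (w i) (g (i + 1))) ∧ ∀ N, ∃ i ≥ N, g i ∈ B.F

def AcceptsFrom (B : Buchi Al) (q : B.Q) (w : ℕ → Al) : Prop :=
  ∃ g, g 0 = q ∧ B.IsAccRun w g

variable {B : Buchi Al} {w v : ℕ → Al} {g h : ℕ → B.Q} {k l : ℕ}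

theorem IsPath.mono (hg : B.IsPath w k g) (hl : l ≤ k) : B.IsPath w l g :=
  fun i hi => hg i (by omega)

theorem IsPath.shift (hg : B.IsPath w k g) (t : ℕ) :
    B.IsPath (fun i => w (i + t)) (k - t) (fun i => g (i + t)) := fun i hi => by
  simpa [Nat.add_right_comm] using hg (i + t) (by omega)

theorem IsAccRun.isPath (hg : B.IsAccRun w g) (k : ℕ) : B.IsPath w k g :=
  fun i _ => hg.1 i

theorem IsAccRun.acceptsFrom_drop (hg : B.IsAccRun w g) (t : ℕ) :
    B.AcceptsFrom (g t) fun i => w (i + t) := by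
  refine ⟨fun i => g (i + t), by simp, fun i => by simpa [Nat.add_right_comm] using hg.1 (i + t),
    fun N => ?_⟩
  obtain ⟨i, hi, hF⟩ := hg.2 (N + t)
  exact ⟨i - t, by omega, by simpa [Nat.sub_add_cancel (show t ≤ i by omega)]⟩

theorem tr_splice (hg : B.IsPath w k g) (hgh : g k = h 0) {i : ℕ}
    (hh : k ≤ i → B.Tr (h (i - k)) (v (i - k)) (h (i - k + 1))) :
    B.Tr (splice g k h i) (splice w k v i) (splice g k h (i + 1)) := by
  unfold splice
  rcases lt_or_ge i k with hik | hik
  · rw [if_pos hik, if_pos hik]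
    by_cases hik' : i + 1 < k
    · rw [if_pos hik']
      exact hg i hik
    · rw [if_neg hik', show i + 1 - k = 0 by omega, ← hgh, show k = i + 1 by omega]
      exact hg i hik
  · rw [if_neg (by omega), if_neg (by omega), if_neg (by omega),
      show i + 1 - k = i - k + 1 by omega]
    exact hh hik

theorem IsPath.append (hg : B.IsPath w k g) (hgh : g k = h 0) (hh : B.IsPath v l h) :
    B.IsPath (splice w k v) (k + l) (splice g k h) :=
  fun _ hi => tr_splice hg hgh fun _ => hh _ (by omega)

theorem IsPath.acceptsFrom_splice (hg : B.IsPath w k g) (hacc : B.AcceptsFrom (g k) v) :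
    B.AcceptsFrom (g 0) (splice w k v) := by
  obtain ⟨h, hh0, hrun, hinf⟩ := hacc
  refine ⟨splice g k h, splice_zero hh0.symm, fun i => tr_splice hg hh0.symm fun _ => hrun _,
    fun N => ?_⟩
  obtain ⟨i, hi, hF⟩ := hinf N
  exact ⟨i + k, by omega, by simpa [splice] using hF⟩

theorem IsPath.exists_injective {σ : Al} {j : ℕ} (hg : B.IsPath (fun _ => σ) j g) :
    ∃ p g', g' 0 = g 0 ∧ g' p = g j ∧ B.IsPath (fun _ => σ) p g' ∧
      Function.Injective fun t : Fin (p + 1) => g' t := by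
  induction j using Nat.strong_induction_on generalizing g with
  | _ j ih =>
  by_cases hinj : Function.Injective fun t : Fin (j + 1) => g t
  · exact ⟨j, g, rfl, rfl, hg, hinj⟩
  obtain ⟨t₁, t₂, hlt, hle, hloop⟩ : ∃ t₁ t₂, t₁ < t₂ ∧ t₂ ≤ j ∧ g t₁ = g t₂ := by
    simp only [Function.Injective, not_forall] at hinj
    obtain ⟨a, b, hab, hne⟩ := hinj
    rcases lt_or_gt_of_ne (Fin.val_ne_of_ne hne) with h | h
    · exact ⟨a, b, h, by omega, hab⟩
    · exact ⟨b, a, h, by omega, hab.symm⟩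
  have hcut : B.IsPath (fun _ => σ) (t₁ + (j - t₂)) (splice g t₁ fun i => g (i + t₂)) := by
    rw [← splice_const σ t₁]
    exact (hg.mono (by omega)).append (by simpa using hloop) (hg.shift t₂)
  obtain ⟨p, g', h0, hp, hpath, hinj'⟩ := ih _ (by omega) hcut
  refine ⟨p, g', h0.trans (splice_zero (by simpa using hloop)), hp.trans ?_, hpath, hinj'⟩
  simp only [splice, if_neg (by omega : ¬ t₁ + (j - t₂) < t₁)]
  congr 1
  omega

theorem seqOver_iff {q q' : B.Q} {σ : Al} {l : List (B.Q × Option Al × B.Q)} :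
    B.toLTS.SeqOver q σ l q' ↔ l = [(q, some σ, q')] ∧ B.Tr q σ q' := by
  constructor
  · rcases l with _ | ⟨⟨q₁, _ | σ₁, q₂⟩, _ | ⟨⟨q₃, _ | σ₂, q₄⟩, l⟩⟩ <;>
      simp [LTS.SeqOver, LTS.Path, LTS.wordOf, toLTS]
    rintro rfl htr rfl rfl
    exact ⟨⟨rfl, rfl, rfl⟩, htr⟩
  · rintro ⟨rfl, htr⟩
    simpa [LTS.SeqOver, LTS.Path, LTS.wordOf, toLTS] using htr

theorem validMoves_iff {w : ℕ → Al} {em : ℕ → List (B.Q × Option Al × B.Q)} :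
    B.toLTS.ValidMoves w em ↔ ∃ qs : ℕ → B.Q, qs 0 = B.init ∧
      ∀ i, em i = [(qs i, some (w i), qs (i + 1))] ∧ B.Tr (qs i) (w i) (qs (i + 1)) :=
  exists_congr fun _ => and_congr Iff.rfl (forall_congr' fun _ => seqOver_iff)

theorem flatAcc_iff_of_singleton {em : ℕ → List (B.Q × Option Al × B.Q)}
    {t : ℕ → B.Q × Option Al × B.Q} (hem : ∀ i, em i = [t i]) :
    B.toLTS.FlatAcc em ↔ ∀ N, ∃ i ≥ N, (t i).1 ∈ B.F := by
  obtain rfl : em = fun i => [t i] := funext hem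
  constructor
  · rintro ⟨ρ, ⟨b, hb0, hbs, hget⟩, hacc⟩
    have hb : ∀ i, b i = i := fun i => by
      induction i with
      | zero => exact hb0
      | succ i ih => rw [hbs, ih]; rfl
    have hρ : ρ = t := funext fun i => by
      have := hget i 0 Nat.zero_lt_one
      rwa [hb] at this
    exact hρ ▸ hacc
  · refine fun h => ⟨t, ⟨id, rfl, fun _ => rfl, fun i j hj => ?_⟩, h⟩
    obtain rfl := Nat.lt_one_iff.1 hj
    rfl

theorem mem_lang_iff {w : ℕ → Al} : w ∈ B.toLTS.Lang ↔ B.AcceptsFrom B.init w := by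
  constructor
  · rintro ⟨ρ, ⟨h0, hstep⟩, ⟨φ, hmono, hlab, hcover⟩, hacc⟩
    have hsurj : Function.Surjective φ := fun i =>
      hcover i (by obtain ⟨σ, hσ, -⟩ := (hstep i).1; simp [hσ])
    -- a surjective strictly monotone self-map of `ℕ` is an order isomorphism, hence the identity
    have hφ : ∀ i, φ i = i := fun i => congrArg (fun e : ℕ ≃o ℕ => e i)
      (Subsingleton.elim (hmono.orderIsoOfSurjective φ hsurj) (OrderIso.refl ℕ))
    refine ⟨fun i => (ρ i).1, h0, fun i => ?_, hacc⟩
    obtain ⟨σ, hσ, htr⟩ := (hstep i).1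
    obtain rfl : σ = w i := by simpa [hφ, hσ] using hlab i
    simpa [(hstep i).2] using htr
  · rintro ⟨g, h0, hrun, hinf⟩
    exact ⟨fun i => (g i, some (w i), g (i + 1)), ⟨h0, fun i => ⟨⟨w i, rfl, hrun i⟩, rfl⟩⟩,
      ⟨id, strictMono_id, fun _ => rfl, fun i _ => ⟨i, rfl⟩⟩, hinf⟩

theorem simulates_of_forall_accRun {M : Buchi Al} (s : List Al → M.Q → B.Q)
    (hinit : s [] M.init = B.init)
    (hwin : ∀ w g, g 0 = M.init → M.IsAccRun w g →
      (∀ i, B.Tr (s (List.ofFn fun j : Fin i => w j) (g i)) (w i)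
        (s (List.ofFn fun j : Fin (i + 1) => w j) (g (i + 1)))) ∧
      ∀ N, ∃ i ≥ N, s (List.ofFn fun j : Fin i => w j) (g i) ∈ B.F) :
    B.toLTS.Simulates M.toLTS := by
  let source (l : List (M.toLTS.St × Option Al × M.toLTS.St)) : M.Q :=
    (l.head?.map Prod.fst).getD M.init
  let target (l : List (M.toLTS.St × Option Al × M.toLTS.St)) : M.Q :=
    (l.getLast?.map (·.2.2)).getD M.init
  let st (hist : List (Al × List (M.toLTS.St × Option Al × M.toLTS.St))) :
      List (B.toLTS.St × Option Al × B.toLTS.St) :=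
    hist.getLast?.elim [] fun p =>
      [(s (hist.dropLast.map Prod.fst) (source p.2), some p.1, s (hist.map Prod.fst) (target p.2))]
  refine ⟨st, fun am hvalid => or_iff_not_imp_left.2 fun hacc => ?_⟩
  obtain ⟨qs, hqs0, hqs⟩ := validMoves_iff.1 hvalid
  obtain ⟨htr, hinf⟩ := hwin (fun i => (am i).1) qs hqs0
    ⟨fun i => (hqs i).2, (flatAcc_iff_of_singleton fun i => (hqs i).1).1 (not_not.1 hacc)⟩
  have hmove : ∀ i, st (List.ofFn fun j : Fin (i + 1) => am j) =
      [(s (List.ofFn fun j : Fin i => (am j).1) (qs i), some (am i).1,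
        s (List.ofFn fun j : Fin (i + 1) => (am j).1) (qs (i + 1)))] := by
    intro i
    have hsplit : ∀ {α : Type} (f : ℕ → α),
        (List.ofFn fun j : Fin (i + 1) => f j) = (List.ofFn fun j : Fin i => f j) ++ [f i] :=
      fun _ => List.ofFn_succ_last
    simp only [st]
    rw [hsplit am, hsplit fun j => (am j).1]
    simp only [Option.elim, List.getLast?_concat, List.dropLast_concat, List.map_append,
      List.map_ofFn, (hqs i).1]
    rfl
  refine ⟨validMoves_iff.2 ⟨_, by simpa [hqs0], fun i => ⟨hmove i, htr i⟩⟩, ?_⟩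
  exact (flatAcc_iff_of_singleton hmove).2 hinf

end Buchi

def chainAutomaton (m : ℕ) : Buchi Bool where
  Q := Fin (m + 2)
  init := 0
  Tr q σ q' :=
    if σ then q.1 ≤ m ∧ (q'.1 = min (q.1 + 1) m ∨ q.1 = m ∧ q'.1 = m + 1)
    else q.1 = m + 1 ∧ q'.1 = m + 1
  F := Set.univ

namespace chainAutomaton

open Buchi

variable {m : ℕ} {A' : Buchi Bool}

theorem aOmega_mem_lang : (fun _ => true) ∈ (chainAutomaton m).toLTS.Lang :=
  mem_lang_iff.2 ⟨fun i => ⟨min i m, by omega⟩, rfl,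
    fun i => by simp [chainAutomaton]; omega, fun N => ⟨N, le_rfl, trivial⟩⟩

theorem aPowB_mem_lang : (fun i => decide (i < m + 1)) ∈ (chainAutomaton m).toLTS.Lang :=
  mem_lang_iff.2 ⟨fun i => ⟨min i (m + 1), by omega⟩, rfl,
    fun i => by by_cases hi : i < m + 1 <;> simp [chainAutomaton, hi] <;> omega,
    fun N => ⟨N, le_rfl, trivial⟩⟩

theorem b_suffix {w : ℕ → Bool} (hw : w ∈ (chainAutomaton m).toLTS.Lang) {i : ℕ}
    (hi : w i = false) : m + 1 ≤ i ∧ ∀ j ≥ i, w j = false := by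
  obtain ⟨g, hg0, hrun, -⟩ := mem_lang_iff.1 hw
  have hstep : ∀ j, (w j = false ↔ (g j).1 = m + 1) ∧ (g (j + 1)).1 ≤ (g j).1 + 1 ∧
      ((g j).1 = m + 1 → (g (j + 1)).1 = m + 1) := fun j => by
    have htr := hrun j
    have hlt := (g j).2
    cases hwj : w j <;> simp [chainAutomaton, hwj] at htr ⊢ <;> omega
  have hle : ∀ j, (g j).1 ≤ j := fun j => by
    induction j with
    | zero => simp [hg0, chainAutomaton]
    | succ j ih => have := (hstep j).2.1; omega
  refine ⟨(hstep i).1.1 hi ▸ hle i, fun j hij => ?_⟩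
  induction j, hij using Nat.le_induction with
  | base => exact hi
  | succ j _ ih => exact (hstep _).1.2 ((hstep j).2.2 ((hstep j).1.1 ih))

theorem not_hd (m : ℕ) : ¬ (chainAutomaton m).toLTS.HD := by
  rintro ⟨st, hst⟩
  obtain ⟨qs, hqs0, hqs⟩ := validMoves_iff.1 (hst _ aOmega_mem_lang).1
  obtain ⟨qs', hqs0', hqs'⟩ := validMoves_iff.1 (hst _ aPowB_mem_lang).1
  have hagree : ∀ i ≤ m + 1, qs i = qs' i := fun i hi => by
    induction i with
    | zero => rw [hqs0, hqs0']
    | succ i ih =>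
      have hprefix : (List.ofFn fun j : Fin (i + 1) => true) =
          List.ofFn fun j : Fin (i + 1) => decide (j.1 < m + 1) := by
        congr 1
        funext j
        simp
        omega
      have hmove := (hqs i).1.symm.trans ((congrArg st hprefix).trans (hqs' i).1)
      simp only [List.cons.injEq, Prod.mk.injEq] at hmove
      exact hmove.1.2.2
  have ha := (hqs (m + 1)).2
  have hb := (hqs' (m + 1)).2
  rw [← hagree (m + 1) le_rfl] at hb
  simp [chainAutomaton] at ha hb
  omega

theorem not_acceptsFrom_b_of_short_aPath
    (hsub : A'.toLTS.Lang ⊆ (chainAutomaton m).toLTS.Lang) {g : ℕ → A'.Q} {r : ℕ}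
    (hg0 : g 0 = A'.init) (hg : A'.IsPath (fun _ => true) r g) (hr : r ≤ m) :
    ¬ A'.AcceptsFrom (g r) fun _ => false := fun hb => by
  have hw := hsub (mem_lang_iff.2 (hg0 ▸ hg.acceptsFrom_splice hb))
  have := (b_suffix hw (i := r) (by simp [splice])).1
  omega

theorem not_acceptsFrom_b_and_a [Finite A'.Q] (hcard : Nat.card A'.Q ≤ m + 2)
    (hsub : A'.toLTS.Lang ⊆ (chainAutomaton m).toLTS.Lang) {g : ℕ → A'.Q} {j : ℕ}
    (hg0 : g 0 = A'.init) (hg : A'.IsPath (fun _ => true) j g)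
    (hb : A'.AcceptsFrom (g j) fun _ => false) {v : ℕ → Bool} (hv : v 0 = true)
    (ha : A'.AcceptsFrom (g j) v) : False := by
  obtain ⟨p, g', hg'0, hg'p, hpath, hinj⟩ := hg.exists_injective
  rw [← hg'p] at hb ha
  rw [← hg'0] at hg0
  have hp : p = m + 1 := by
    have := Nat.card_le_card_of_injective _ hinj
    rw [Nat.card_eq_fintype_card, Fintype.card_fin] at this
    by_contra hne
    exact not_acceptsFrom_b_of_short_aPath hsub hg0 hpath (by omega) hb
  subst hp
  obtain ⟨h, hh0, hrun⟩ := hb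
  -- the path visits every state, in particular the `b`-successor of `g' (m + 1)`
  obtain ⟨r, hr⟩ := (hinj.bijective_of_nat_card_le (by simpa using hcard)).2 (h 1)
  have hr : g' r = h 1 := hr
  have hloop : h 1 = g' (m + 1) := by
    have hr' : (r : ℕ) = m + 1 := by
      by_contra hne
      refine not_acceptsFrom_b_of_short_aPath hsub hg0 (hpath.mono (by omega : (r : ℕ) ≤ m + 1))
        (by omega) ?_
      rw [hr]
      exact hrun.acceptsFrom_drop 1
    rw [← hr, hr']
  have hbad := hpath.acceptsFrom_splice
    (hh0 ▸ (hrun.isPath 1).acceptsFrom_splice (hloop ▸ ha))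
  have := (b_suffix (hsub (mem_lang_iff.2 (hg0 ▸ hbad))) (i := m + 1) (by simp [splice])).2
    (m + 2) (by omega)
  simp [splice, hv] at this

open Classical in
/-- Eve's state in `chainAutomaton m` once the word `u` has been read and Adam's run is in `q`. -/
noncomputable def guideState (A' : Buchi Bool) (m : ℕ) (u : List Bool) (q : A'.Q) :
    Fin (m + 2) :=
  if false ∉ u ∧ (u.length ≤ m ∨ ¬ A'.AcceptsFrom q fun _ => false) then
    ⟨min u.length m, by omega⟩
  else Fin.last (m + 1)

theorem guideState_of_false_mem {u : List Bool} (hu : false ∈ u) (q : A'.Q) :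
    guideState A' m u q = Fin.last (m + 1) :=
  if_neg fun h => h.1 hu

open Classical in
theorem guideState_val_of_forall_true {w : ℕ → Bool} {k : ℕ} (hw : ∀ j < k, w j = true)
    (q : A'.Q) : (guideState A' m (List.ofFn fun j : Fin k => w j) q : ℕ) =
      if k ≤ m ∨ ¬ A'.AcceptsFrom q (fun _ => false) then min k m else m + 1 := by
  have hu : false ∉ List.ofFn fun j : Fin k => w j := by
    simpa [List.mem_ofFn, Fin.forall_iff] using hw
  unfold guideState
  split_ifs <;> simp_all

theorem simulates [Finite A'.Q] (hcard : Nat.card A'.Q ≤ m + 2)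
    (hsub : A'.toLTS.Lang ⊆ (chainAutomaton m).toLTS.Lang) :
    (chainAutomaton m).toLTS.Simulates A'.toLTS := by
  refine simulates_of_forall_accRun (guideState A' m) (by simp [guideState]; rfl)
    fun w g hg0 hrun => ⟨fun i => ?_, fun N => ⟨N, le_rfl, trivial⟩⟩
  have hw := hsub (mem_lang_iff.2 ⟨g, hg0, hrun⟩)
  cases hwi : w i
  · obtain ⟨hmi, hlate⟩ := b_suffix hw hwi
    have hb : A'.AcceptsFrom (g i) fun _ => false := by
      simpa [hlate _ (Nat.le_add_left i _)] using hrun.acceptsFrom_drop i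
    have h₁ : guideState A' m (List.ofFn fun j : Fin i => w j) (g i) = Fin.last (m + 1) := by
      by_cases hall : ∀ j < i, w j = true
      · exact Fin.ext <| (guideState_val_of_forall_true hall _).trans (by simp [hb]; omega)
      · obtain ⟨j, hj, hwj⟩ := not_forall₂.1 hall
        exact guideState_of_false_mem (List.mem_ofFn.2 ⟨⟨j, hj⟩, by simpa using hwj⟩) _
    have h₂ := guideState_of_false_mem (m := m) (A' := A')
      (List.mem_ofFn.2 ⟨⟨i, i.lt_add_one⟩, hwi⟩ : false ∈ List.ofFn fun j : Fin (i + 1) => w j)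
      (g (i + 1))
    rw [h₁, h₂]
    simp [chainAutomaton]
  · have hpre : ∀ j < i, w j = true := fun j hj => by
      by_contra h
      simpa [hwi] using (b_suffix hw (Bool.eq_false_iff.2 h)).2 i hj.le
    have hnb : ¬ A'.AcceptsFrom (g i) fun _ => false := fun hb =>
      not_acceptsFrom_b_and_a hcard hsub hg0 (fun j hj => hpre j hj ▸ hrun.1 j) hb
        (v := fun j => w (j + i)) (by simpa using hwi) (hrun.acceptsFrom_drop i)
    have hpre' : ∀ j < i + 1, w j = true := fun j hj =>
      (Nat.lt_succ_iff_lt_or_eq.1 hj).elim (hpre j) (· ▸ hwi)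
    simp only [chainAutomaton, if_true, guideState_val_of_forall_true hpre,
      guideState_val_of_forall_true hpre', hnb, not_false_eq_true, or_true]
    split_ifs <;> omega

theorem guidable (m : ℕ) : (chainAutomaton m).toLTS.Guidable
    {L | ∃ A' : Buchi Bool, Finite A'.Q ∧ Nat.card A'.Q ≤ m + 2 ∧ A'.toLTS = L} := by
  rintro _ ⟨A', hfin, hcard, rfl⟩ hsub
  exact simulates hcard hsub

end chainAutomaton

/-- For every `n ≥ 1` there is a Büchi automaton over `{a, b}` (here
`Bool`) with at most `2n` states that is guidable with respect to the class of Büchi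
automata over `{a, b}` with at most `2n` states, but is not history-deterministic; hence
history-determinism and guidability are distinct for this class. -/
theorem buchi_bounded_states_guidable_not_hd (n : ℕ) (hn : 1 ≤ n) :
    ∃ A : Buchi Bool, Finite A.Q ∧ Nat.card A.Q ≤ 2 * n ∧
      A.toLTS.Guidable
        {L | ∃ A' : Buchi Bool, Finite A'.Q ∧ Nat.card A'.Q ≤ 2 * n ∧ A'.toLTS = L} ∧
      ¬ A.toLTS.HD := by
  obtain ⟨m, hm⟩ : ∃ m, 2 * n = m + 2 := ⟨2 * n - 2, by omega⟩
  rw [hm]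
  exact ⟨chainAutomaton m, inferInstanceAs (Finite (Fin (m + 2))),
    by simp [chainAutomaton], chainAutomaton.guidable m, chainAutomaton.not_hd m⟩
end
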